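/- arXiv:1611.02994 — 10 statements merged into one kernel-verified Lean document; each statement's English description precedes it below -/
import Mathlib

section
/- Let X be a completely regular Hausdorff space and let 𝒯 be a directed family of functionally bounded subsets of X containing all finite subsets. If K ⊆ C(X,ℝ) is compact in the set-open topology τ_𝒯 and the evaluation map X × K → ℝ, (x,f) ↦ f(x), is jointly continuous (K carrying the subspace topology induced by τ_𝒯), then K is equicontinuous. -/
open Set Topology

/-- A subset `A` of a topological space `Y` is functionally bounded if every continuous
real-valued function on `Y` is bounded on `A`. -/
def FunctionallyBounded {Y : Type*} [TopologicalSpace Y] (A : Set Y) : Prop :=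
  ∀ f : C(Y, ℝ), Bornology.IsBounded (f '' A)

/-- The set-open topology on `C(X, ℝ)` generated by a family `𝒯` of subsets of `X`. -/
def setOpenTopology (X : Type*) [TopologicalSpace X] (𝒯 : Set (Set X)) :
    TopologicalSpace C(X, ℝ) :=
  TopologicalSpace.generateFrom
    {S | ∃ A ∈ 𝒯, ∃ U : Set ℝ, IsOpen U ∧ S = {f : C(X, ℝ) | Set.MapsTo (⇑f) A U}}

theorem CompactSpace.equicontinuous_of_continuous_uncurry {X ι α : Type*} [TopologicalSpace X]
    [TopologicalSpace ι] [CompactSpace ι] [UniformSpace α] (F : ι → X → α)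
    (hF : Continuous fun p : X × ι => F p.2 p.1) : Equicontinuous F := by
  intro x₀ u hu
  obtain ⟨v, hv, hvu⟩ := isCompact_univ.mem_uniformity_of_prod (f := fun x i => F i x)
    hF.continuousOn (mem_univ x₀) (symm_le_uniformity hu)
  rw [nhdsWithin_univ] at hv
  exact Filter.mem_of_superset hv fun x hx i => hvu x hx i (mem_univ i)

theorem statement1_general {X : Type*} [TopologicalSpace X]
    (𝒯 : Set (Set X))
    (K : Set C(X, ℝ))
    (hKcomp : @IsCompact C(X, ℝ) (setOpenTopology X 𝒯) K)
    (hev : @Continuous (X × K) ℝ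
      (@instTopologicalSpaceProd X K _
        (TopologicalSpace.induced (Subtype.val : K → C(X, ℝ)) (setOpenTopology X 𝒯))) _
      (fun p => (p.2 : C(X, ℝ)) p.1)) :
    Equicontinuous fun f : K => ((f : C(X, ℝ)) : X → ℝ) := by
  let _ : TopologicalSpace C(X, ℝ) := setOpenTopology X 𝒯
  have : CompactSpace K := isCompact_iff_compactSpace.mp hKcomp
  exact CompactSpace.equicontinuous_of_continuous_uncurry _ hev

/-- If `K ⊆ C(X,ℝ)` is `τ_𝒯`-compact and the evaluation map `X × K → ℝ` is jointly continuous
(`K` carrying the subspace topology induced by `τ_𝒯`), then `K` is equicontinuous. -/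
theorem statement1 {X : Type*} [TopologicalSpace X] [CompletelyRegularSpace X] [T2Space X]
    (𝒯 : Set (Set X))
    (h_fb : ∀ A ∈ 𝒯, FunctionallyBounded A)
    (h_dir : ∀ A ∈ 𝒯, ∀ B ∈ 𝒯, ∃ C ∈ 𝒯, A ∪ B ⊆ C)
    (h_fin : ∀ A : Set X, A.Finite → A ∈ 𝒯)
    (K : Set C(X, ℝ))
    (hKcomp : @IsCompact C(X, ℝ) (setOpenTopology X 𝒯) K)
    (hev : @Continuous (X × K) ℝ
      (@instTopologicalSpaceProd X K _
        (TopologicalSpace.induced (Subtype.val : K → C(X, ℝ)) (setOpenTopology X 𝒯))) _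
      (fun p => (p.2 : C(X, ℝ)) p.1)) :
    Equicontinuous fun f : K => ((f : C(X, ℝ)) : X → ℝ) :=
  statement1_general 𝒯 K hKcomp hev
end

section
/- Let X be a completely regular Hausdorff space and let K be a compact subset of C(X,ℝ) equipped with the compact-open topology. Then the following are equivalent: (a) K is equicontinuous; (b) the evaluation map X × K → ℝ, (x,f) ↦ f(x), is jointly continuous when K carries the subspace topology of pointwise convergence; (c) the evaluation map X × K → ℝ is jointly continuous when K carries the subspace topology induced by the compact-open topology. -/
/-!
Equicontinuity gives joint continuity already for the coarsest topology on `K` making the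
evaluations continuous, the pointwise one; since the compact-open topology is finer, joint
continuity for it follows. Conversely, if evaluation is jointly continuous on `X × K` with `K`
compact, a tube-lemma argument over `K` makes `f x` uniformly close to `f x₀` for all `f ∈ K`
once `x` is close to `x₀`, which is equicontinuity at `x₀`.
-/

open Set Topology Filter

section

variable {X ι α : Type*} [TopologicalSpace X] [TopologicalSpace ι] [UniformSpace α]
  {F : ι → X → α}

theorem Equicontinuous.continuous_uncurry_swap (hF : Equicontinuous F)
    (hcont : ∀ x, Continuous fun i => F i x) : Continuous fun p : X × ι => F p.2 p.1 := by
  rw [continuous_iff_continuousAt]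
  rintro ⟨x₀, i₀⟩
  rw [ContinuousAt, nhds_prod_eq, Uniform.tendsto_nhds_right]
  intro U hU
  obtain ⟨V, hV, hVU⟩ := comp_mem_uniformity_sets hU
  have near_x₀ : ∀ᶠ x in 𝓝 x₀, ∀ i, (F i x₀, F i x) ∈ V := hF x₀ V hV
  have near_i₀ : ∀ᶠ i in 𝓝 i₀, (F i₀ x₀, F i x₀) ∈ V :=
    Uniform.tendsto_nhds_right.mp (hcont x₀).continuousAt hV
  rw [mem_map]
  filter_upwards [prod_mem_prod near_x₀ near_i₀]
  rintro ⟨x, i⟩ ⟨hx, hi⟩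
  exact hVU (SetRel.prodMk_mem_comp hi (hx i))

theorem equicontinuous_of_continuous_uncurry_swap [CompactSpace ι]
    (h : Continuous fun p : X × ι => F p.2 p.1) : Equicontinuous F := by
  intro x₀ U hU
  obtain ⟨v, hv, hvU⟩ := isCompact_univ.mem_uniformity_of_prod (f := fun x i => F i x)
    h.continuousOn (mem_univ x₀) (symm_le_uniformity hU)
  rw [nhdsWithin_univ] at hv
  filter_upwards [hv] with x hx i using hvU x hx i (mem_univ i)

end

theorem ContinuousMap.continuous_eval_of_continuous_eval_pointwise {X Y : Type*}
    [TopologicalSpace X] [TopologicalSpace Y] (K : Set C(X, Y))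
    (h : @Continuous (X × K) Y
        (@instTopologicalSpaceProd X K _
          (TopologicalSpace.induced (fun f : K => ((f : C(X, Y)) : X → Y)) Pi.topologicalSpace))
        _ (fun p => (p.2 : C(X, Y)) p.1)) :
    Continuous fun p : X × K => (p.2 : C(X, Y)) p.1 := by
  have compactOpen_le_pointwise : (instTopologicalSpaceSubtype : TopologicalSpace K) ≤
      TopologicalSpace.induced (fun f : K => ((f : C(X, Y)) : X → Y)) Pi.topologicalSpace :=
    continuous_iff_le_induced.mp (continuous_coeFun.comp continuous_subtype_val)
  exact continuous_le_dom (inf_le_inf le_rfl (induced_mono compactOpen_le_pointwise)) h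

theorem statement2_general {X : Type*} [TopologicalSpace X]
    (K : Set C(X, ℝ)) (hK : IsCompact K) :
    ((Equicontinuous fun f : K => ((f : C(X, ℝ)) : X → ℝ)) ↔
      @Continuous (X × K) ℝ
        (@instTopologicalSpaceProd X K _
          (TopologicalSpace.induced (fun f : K => ((f : C(X, ℝ)) : X → ℝ)) Pi.topologicalSpace))
        _ (fun p => (p.2 : C(X, ℝ)) p.1)) ∧
    ((Equicontinuous fun f : K => ((f : C(X, ℝ)) : X → ℝ)) ↔
      Continuous fun p : X × K => (p.2 : C(X, ℝ)) p.1) := by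
  have : CompactSpace K := isCompact_iff_compactSpace.mp hK
  have a_to_b (ha : Equicontinuous fun f : K => ((f : C(X, ℝ)) : X → ℝ)) :
      @Continuous (X × K) ℝ
        (@instTopologicalSpaceProd X K _
          (TopologicalSpace.induced (fun f : K => ((f : C(X, ℝ)) : X → ℝ)) Pi.topologicalSpace))
        _ (fun p => (p.2 : C(X, ℝ)) p.1) :=
    letI := TopologicalSpace.induced (fun f : K => ((f : C(X, ℝ)) : X → ℝ)) Pi.topologicalSpace
    ha.continuous_uncurry_swap fun x => (continuous_apply x).comp continuous_induced_dom
  have b_to_c := ContinuousMap.continuous_eval_of_continuous_eval_pointwise K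
  have c_to_a (hc : Continuous fun p : X × K => (p.2 : C(X, ℝ)) p.1) :
      Equicontinuous fun f : K => ((f : C(X, ℝ)) : X → ℝ) :=
    equicontinuous_of_continuous_uncurry_swap hc
  exact ⟨⟨a_to_b, c_to_a ∘ b_to_c⟩, ⟨b_to_c ∘ a_to_b, c_to_a⟩⟩

/-- For a compact subset `K` of `C(X,ℝ)` with the compact-open topology, the following are
equivalent: (a) `K` is equicontinuous; (b) the evaluation map `X × K → ℝ` is jointly continuous
when `K` carries the subspace topology of pointwise convergence; (c) the evaluation map is
jointly continuous when `K` carries the subspace topology induced by the compact-open topology. -/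
theorem statement2 {X : Type*} [TopologicalSpace X] [CompletelyRegularSpace X] [T2Space X]
    (K : Set C(X, ℝ)) (hK : IsCompact K) :
    ((Equicontinuous fun f : K => ((f : C(X, ℝ)) : X → ℝ)) ↔
      @Continuous (X × K) ℝ
        (@instTopologicalSpaceProd X K _
          (TopologicalSpace.induced (fun f : K => ((f : C(X, ℝ)) : X → ℝ)) Pi.topologicalSpace))
        _ (fun p => (p.2 : C(X, ℝ)) p.1)) ∧
    ((Equicontinuous fun f : K => ((f : C(X, ℝ)) : X → ℝ)) ↔
      Continuous fun p : X × K => (p.2 : C(X, ℝ)) p.1) :=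
  statement2_general K hK
end

section
/- Let X be a completely regular Hausdorff space and let 𝒯 be a directed family of functionally bounded subsets of X containing all finite subsets. Denote by C_𝒯(X) the space C(X,ℝ) equipped with the set-open topology τ_𝒯. Then the canonical map δ : X → C(C_𝒯(X),ℝ), δ(x)(f) := f(x), where C(C_𝒯(X),ℝ) carries the compact-open topology, is well defined (each δ(x) is continuous on C_𝒯(X)) and is continuous if and only if every τ_𝒯-compact subset of C(X,ℝ) is equicontinuous. -/
/-!
Evaluations `f ↦ f x` are `τ_𝒯`-continuous because singletons belong to `𝒯`. The compact-open
topology on `C(C_𝒯(X), ℝ)` is the topology of uniform convergence on compact sets, so `δ` is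
continuous at `x₀` iff `δ x → δ x₀` uniformly on every compact `K ⊆ C_𝒯(X)`; unfolding, this says
exactly that `K`, as a family of functions on `X`, is equicontinuous at `x₀`.
-/

open Set Topology

/-- `C_𝒯(X)`: the space `C(X,ℝ)` equipped with the set-open topology `τ_𝒯`. -/
def CT (X : Type*) [TopologicalSpace X] (𝒯 : Set (Set X)) : Type _ := C(X, ℝ)

instance (X : Type*) [TopologicalSpace X] (𝒯 : Set (Set X)) : TopologicalSpace (CT X 𝒯) :=
  setOpenTopology X 𝒯

/-- The underlying continuous map of an element of `CT X 𝒯`. -/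
def CT.toCM {X : Type*} [TopologicalSpace X] {𝒯 : Set (Set X)} (f : CT X 𝒯) : C(X, ℝ) := f

theorem CT.isOpen_setOf_mapsTo {X : Type*} [TopologicalSpace X] {𝒯 : Set (Set X)} {A : Set X}
    (hA : A ∈ 𝒯) {U : Set ℝ} (hU : IsOpen U) :
    IsOpen {f : CT X 𝒯 | MapsTo f.toCM A U} :=
  TopologicalSpace.GenerateOpen.basic _ ⟨A, hA, U, hU, rfl⟩

theorem CT.continuous_eval_of_singleton_mem {X : Type*} [TopologicalSpace X]
    {𝒯 : Set (Set X)} {x : X} (hx : {x} ∈ 𝒯) :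
    Continuous fun f : CT X 𝒯 => f.toCM x := by
  refine continuous_def.mpr fun U hU => ?_
  simpa only [mapsTo_singleton, preimage] using CT.isOpen_setOf_mapsTo hx hU

theorem tendstoUniformlyOn_swap_iff_equicontinuousAt {X Y α : Type*} [TopologicalSpace X]
    [UniformSpace α] {F : Y → X → α} {x₀ : X} {K : Set Y} :
    TendstoUniformlyOn (fun x y => F y x) (fun y => F y x₀) (𝓝 x₀) K ↔
      EquicontinuousAt (fun y : K => F y) x₀ := by
  simp only [TendstoUniformlyOn, EquicontinuousAt, Subtype.forall]

theorem ContinuousMap.continuous_iff_forall_isCompact_equicontinuous {X Y α : Type*}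
    [TopologicalSpace X] [TopologicalSpace Y] [UniformSpace α] {δ : X → C(Y, α)} :
    Continuous δ ↔ ∀ K : Set Y, IsCompact K → Equicontinuous fun y : K => fun x => δ x y := by
  simp only [continuous_iff_continuousAt, ContinuousAt,
    ContinuousMap.tendsto_iff_forall_isCompact_tendstoUniformlyOn,
    ← tendstoUniformlyOn_swap_iff_equicontinuousAt (F := fun y x => δ x y), Equicontinuous]
  exact ⟨fun h K hK x => h x K hK, fun h x K hK => h K hK x⟩

theorem statement3_general {X : Type*} [TopologicalSpace X]
    (𝒯 : Set (Set X))
    (h_fin : ∀ A : Set X, A.Finite → A ∈ 𝒯) :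
    (∀ x : X, Continuous fun f : CT X 𝒯 => f.toCM x) ∧
    (∀ h : ∀ x : X, Continuous fun f : CT X 𝒯 => f.toCM x,
      (Continuous fun x : X => (⟨fun f : CT X 𝒯 => f.toCM x, h x⟩ : C(CT X 𝒯, ℝ))) ↔
        ∀ K : Set (CT X 𝒯), IsCompact K →
          Equicontinuous fun f : K => (((f : CT X 𝒯).toCM : C(X, ℝ)) : X → ℝ)) :=
  ⟨fun x => CT.continuous_eval_of_singleton_mem (h_fin _ (finite_singleton x)),
    fun _ => ContinuousMap.continuous_iff_forall_isCompact_equicontinuous⟩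

/-- The canonical map `δ : X → C(C_𝒯(X), ℝ)`, `δ(x)(f) = f(x)` (target with the compact-open
topology), is well defined, and it is continuous if and only if every `τ_𝒯`-compact subset of
`C(X,ℝ)` is equicontinuous. -/
theorem statement3 {X : Type*} [TopologicalSpace X] [CompletelyRegularSpace X] [T2Space X]
    (𝒯 : Set (Set X))
    (h_fb : ∀ A ∈ 𝒯, FunctionallyBounded A)
    (h_dir : ∀ A ∈ 𝒯, ∀ B ∈ 𝒯, ∃ C ∈ 𝒯, A ∪ B ⊆ C)
    (h_fin : ∀ A : Set X, A.Finite → A ∈ 𝒯) :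
    (∀ x : X, Continuous fun f : CT X 𝒯 => f.toCM x) ∧
    (∀ h : ∀ x : X, Continuous fun f : CT X 𝒯 => f.toCM x,
      (Continuous fun x : X => (⟨fun f : CT X 𝒯 => f.toCM x, h x⟩ : C(CT X 𝒯, ℝ))) ↔
        ∀ K : Set (CT X 𝒯), IsCompact K →
          Equicontinuous fun f : K => (((f : CT X 𝒯).toCM : C(X, ℝ)) : X → ℝ)) :=
  statement3_general 𝒯 h_fin
end

section
/- A real Banach space E is weakly Ascoli if and only if E is finite-dimensional; that is, E equipped with its weak topology σ(E,E′) is an Ascoli space if and only if dim E < ∞. -/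
open Set Topology

/-- A topological space `Y` is Ascoli if every compact subset of `C(Y,ℝ)` (with the
compact-open topology) is equicontinuous. -/
def IsAscoli (Y : Type*) [TopologicalSpace Y] : Prop :=
  ∀ K : Set C(Y, ℝ), IsCompact K → Equicontinuous fun f : K => ((f : C(Y, ℝ)) : Y → ℝ)

/-!
If `E` is finite-dimensional, its weak topology is locally compact, and on a locally compact
space evaluation `C(Y, ℝ) × Y → ℝ` is jointly continuous, which makes every compact family
equicontinuous (tube lemma).

If `E` is infinite-dimensional, so is its dual, which then contains a linearly independent
sequence `fₙ → 0` in norm. Weakly compact sets are norm-bounded (Banach–Steinhaus), so `fₙ → 0`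
uniformly on them and `{0} ∪ {fₙ}` is compact in `C(E_w, ℝ)`. Equicontinuity at `0` would give
finitely many functionals `u₁, …, uₖ` with `|fₙ| < 1` on `⋂ ker uᵢ`; since that is a subspace,
`⋂ ker uᵢ ⊆ ker fₙ`, so all `fₙ` lie in the span of the `uᵢ`, contradicting independence.
-/

open Filter

theorem isAscoli_of_locallyCompactSpace (X : Type*) [TopologicalSpace X] [LocallyCompactSpace X] :
    IsAscoli X := by
  intro K hK x₀ U hU
  have : CompactSpace K := isCompact_iff_compactSpace.mp hK
  obtain ⟨v, hv, hvU⟩ := isCompact_univ.mem_uniformity_of_prod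
    (f := fun (x : X) (f : K) => (f : C(X, ℝ)) x) (by fun_prop) (mem_univ x₀)
    (symm_le_uniformity hU)
  rw [nhdsWithin_univ] at hv
  filter_upwards [hv] with x hx f using hvU x hx f (mem_univ f)

section LinearAlgebra

theorem exists_linearIndependent_nat_of_not_finiteDimensional {K V : Type*} [DivisionRing K]
    [AddCommGroup V] [Module K V] (h : ¬ FiniteDimensional K V) :
    ∃ g : ℕ → V, LinearIndependent K g := by
  let b := Module.Basis.ofVectorSpace K V
  have : Infinite (Module.Basis.ofVectorSpaceIndex K V) := by
    by_contra hfin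
    rw [not_infinite_iff_finite] at hfin
    exact h (Module.Finite.of_basis b)
  let e := Infinite.natEmbedding (Module.Basis.ofVectorSpaceIndex K V)
  exact ⟨b ∘ e, b.linearIndependent.comp e e.injective⟩

theorem exists_linearIndependent_tendsto_zero {𝕜 V : Type*} [NontriviallyNormedField 𝕜]
    [NormedAddCommGroup V] [NormedSpace 𝕜 V] (h : ¬ FiniteDimensional 𝕜 V) :
    ∃ f : ℕ → V, LinearIndependent 𝕜 f ∧ Tendsto f atTop (𝓝 0) := by
  obtain ⟨g, hg⟩ := exists_linearIndependent_nat_of_not_finiteDimensional h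
  have hg0 (n : ℕ) : 0 < ‖g n‖ := norm_pos_iff.mpr (hg.ne_zero n)
  choose c hc_pos hc_lt using fun n : ℕ =>
    NormedField.exists_norm_lt 𝕜 (div_pos (Nat.one_div_pos_of_nat (n := n)) (hg0 n))
  refine ⟨fun n => c n • g n, hg.units_smul fun n => Units.mk0 (c n) (norm_pos_iff.mp (hc_pos n)),
    squeeze_zero_norm (fun n => ?_) tendsto_one_div_add_atTop_nhds_zero_nat⟩
  rw [norm_smul]
  exact ((lt_div_iff₀ (hg0 n)).mp (hc_lt n)).le

theorem FiniteDimensional.of_strongDual {𝕜 E : Type*} [RCLike 𝕜] [NormedAddCommGroup E]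
    [NormedSpace 𝕜 E] [FiniteDimensional 𝕜 (StrongDual 𝕜 E)] : FiniteDimensional 𝕜 E :=
  FiniteDimensional.of_injective (V₂ := StrongDual 𝕜 (StrongDual 𝕜 E))
    (NormedSpace.inclusionInDoubleDualLi 𝕜 (E := E)).toLinearMap
    (NormedSpace.inclusionInDoubleDualLi 𝕜).injective

end LinearAlgebra

section WeakTopology

variable {𝕜 E : Type*} [NormedField 𝕜] [AddCommGroup E] [TopologicalSpace E] [Module 𝕜 E]

theorem WeakSpace.exists_finset_forall_eq_zero_mem_of_mem_nhds_zero {V : Set (WeakSpace 𝕜 E)}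
    (hV : V ∈ 𝓝 0) :
    ∃ s : Finset (StrongDual 𝕜 E), ∀ x : WeakSpace 𝕜 E, (∀ u ∈ s, u x = 0) → x ∈ V := by
  have hind : IsInducing fun (x : WeakSpace 𝕜 E) (u : StrongDual 𝕜 E) => u x := ⟨rfl⟩
  rw [hind.nhds_eq_comap, nhds_pi] at hV
  obtain ⟨T, hT, hTV⟩ := mem_comap.mp hV
  obtain ⟨I, hI, t, ht, hIt⟩ := mem_pi.mp hT
  refine ⟨hI.toFinset, fun x hx => hTV (hIt fun u hu => ?_)⟩
  show u x ∈ t u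
  rw [hx u (hI.mem_toFinset.mpr hu), ← map_zero u]
  exact mem_of_mem_nhds (ht u)

theorem StrongDual.finiteDimensional_span_of_equicontinuousAt {ι : Type*}
    {f : ι → StrongDual 𝕜 E} (hf : EquicontinuousAt (fun i (x : WeakSpace 𝕜 E) => f i x) 0) :
    FiniteDimensional 𝕜 (Submodule.span 𝕜 (range f)) := by
  obtain ⟨s, hs⟩ := WeakSpace.exists_finset_forall_eq_zero_mem_of_mem_nhds_zero
    (Metric.equicontinuousAt_iff_right.mp hf 1 one_pos)
  have hker (i : ι) :
      ⨅ u : s, LinearMap.ker (u : E →ₗ[𝕜] 𝕜) ≤ LinearMap.ker (f i : E →ₗ[𝕜] 𝕜) := by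
    intro x hx
    simp only [Submodule.mem_iInf, LinearMap.mem_ker, ContinuousLinearMap.coe_coe] at hx ⊢
    by_contra hfx
    have := hs ((f i x)⁻¹ • x) (fun u hu => by simp [hx ⟨u, hu⟩]) i
    have h0 : f i (0 : WeakSpace 𝕜 E) = 0 := map_zero (f i)
    simp [h0, map_smul, inv_mul_cancel₀ hfx] at this
  have hmem (i : ι) : f i ∈ Submodule.span 𝕜 (s : Set (StrongDual 𝕜 E)) := by
    obtain ⟨c, hc⟩ :=
      (Submodule.mem_span_range_iff_exists_fun 𝕜).mp (mem_span_of_iInf_ker_le_ker (hker i))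
    have hfi : f i = ∑ j, c j • (j : StrongDual 𝕜 E) :=
      ContinuousLinearMap.coe_injective (by rw [← hc]; push_cast; rfl)
    rw [hfi]
    exact Submodule.sum_mem _ fun j _ => Submodule.smul_mem _ _ (Submodule.subset_span j.2)
  exact Submodule.finiteDimensional_of_le (Submodule.span_le.mpr (range_subset_iff.mpr hmem))

end WeakTopology

section NormedWeakTopology

variable {𝕜 E : Type*} [RCLike 𝕜] [NormedAddCommGroup E] [NormedSpace 𝕜 E]

theorem WeakSpace.isBounded_of_isCompact {C : Set (WeakSpace 𝕜 E)} (hC : IsCompact C) :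
    Bornology.IsBounded (toWeakSpace 𝕜 E ⁻¹' C) := by
  have hpt (u : StrongDual 𝕜 E) :
      ∃ M, ∀ x : C, ‖NormedSpace.inclusionInDoubleDual 𝕜 E (x.1 : E) u‖ ≤ M := by
    obtain ⟨M, hM⟩ := (hC.image (WeakBilin.eval_continuous _ u)).isBounded.exists_norm_le
    exact ⟨M, fun x => hM _ ⟨x, x.2, rfl⟩⟩
  obtain ⟨M, hM⟩ := banach_steinhaus hpt
  refine isBounded_iff_forall_norm_le.mpr ⟨M, fun x hx => ?_⟩
  rw [← (NormedSpace.inclusionInDoubleDualLi 𝕜).norm_map x]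
  exact hM ⟨x, hx⟩

def StrongDual.toContinuousMapWeakSpace (u : StrongDual 𝕜 E) : C(WeakSpace 𝕜 E, 𝕜) :=
  ⟨fun x => u x, WeakBilin.eval_continuous _ u⟩

theorem StrongDual.continuous_toContinuousMapWeakSpace :
    Continuous (toContinuousMapWeakSpace : StrongDual 𝕜 E → C(WeakSpace 𝕜 E, 𝕜)) := by
  refine continuous_iff_continuousAt.mpr fun u₀ => ?_
  refine ContinuousMap.tendsto_iff_forall_isCompact_tendstoUniformlyOn.mpr fun C hC => ?_
  obtain ⟨R, hR, hCR⟩ := (WeakSpace.isBounded_of_isCompact hC).exists_pos_norm_le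
  refine Metric.tendstoUniformlyOn_iff.mpr fun ε hε => ?_
  filter_upwards [Metric.ball_mem_nhds u₀ (div_pos hε hR)] with u hu x hx
  calc dist (u₀ x) (u x) = ‖(u - u₀) ((toWeakSpace 𝕜 E).symm x)‖ := by
        rw [dist_comm, dist_eq_norm]; rfl
    _ ≤ ‖u - u₀‖ * ‖(toWeakSpace 𝕜 E).symm x‖ := (u - u₀).le_opNorm _
    _ ≤ ‖u - u₀‖ * R := by gcongr; exact hCR x hx
    _ < ε := (lt_div_iff₀ hR).mp (by rwa [← dist_eq_norm])

end NormedWeakTopology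

theorem statement4_general (E : Type*) [NormedAddCommGroup E] [NormedSpace ℝ E] :
    IsAscoli (WeakSpace ℝ E) ↔ FiniteDimensional ℝ E := by
  constructor
  · intro hAscoli
    by_contra hE
    have hdual : ¬ FiniteDimensional ℝ (StrongDual ℝ E) := fun _ => hE .of_strongDual
    obtain ⟨f, hf_indep, hf_lim⟩ := exists_linearIndependent_tendsto_zero hdual
    have hK := ((StrongDual.continuous_toContinuousMapWeakSpace.tendsto 0).comp
      hf_lim).isCompact_insert_range
    have hf_equi : EquicontinuousAt (fun n (x : WeakSpace ℝ E) => f n x) 0 :=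
      (hAscoli _ hK 0).comp fun n => ⟨_, mem_insert_of_mem _ (mem_range_self n)⟩
    have := StrongDual.finiteDimensional_span_of_equicontinuousAt hf_equi
    have : Finite ℕ := (linearIndependent_span hf_indep).finite
    exact not_finite ℕ
  · intro _
    have : FiniteDimensional ℝ (WeakSpace ℝ E) := inferInstanceAs (FiniteDimensional ℝ E)
    have := LocallyCompactSpace.of_finiteDimensional_of_complete ℝ (WeakSpace ℝ E)
    exact isAscoli_of_locallyCompactSpace _

/-- A real Banach space `E` is weakly Ascoli if and only if `E` is finite-dimensional. -/
theorem statement4 (E : Type*) [NormedAddCommGroup E] [NormedSpace ℝ E] [CompleteSpace E] :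
    IsAscoli (WeakSpace ℝ E) ↔ FiniteDimensional ℝ E :=
  statement4_general E
end

section
/- Let X be a Hausdorff real locally convex space that is c₀-barrelled and weakly Ascoli. Then every subset A of the topological dual X′ that is σ(X′,X)-bounded (i.e., for every x ∈ X the set {f(x) : f ∈ A} is bounded in ℝ) spans a finite-dimensional linear subspace of X′. -/
open Set Topology Filter

/-- A locally convex space `X` is `c₀`-barrelled if every sequence of continuous linear
functionals converging to `0` pointwise on `X` is equicontinuous. -/
def C0Barrelled (X : Type*) [AddCommGroup X] [Module ℝ X] [TopologicalSpace X] : Prop :=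
  ∀ u : ℕ → (X →L[ℝ] ℝ),
    (∀ x : X, Tendsto (fun n => u n x) atTop (nhds 0)) →
      Equicontinuous fun n => ((u n : X →L[ℝ] ℝ) : X → ℝ)

/-!
Suppose `A` contains a linearly independent sequence `fₙ`. Since `A` is weakly* bounded,
`gₙ = fₙ / (n + 1)` tends to `0` weakly*, so `(gₙ)` is equicontinuous by `c₀`-barrelledness.
Then `x ↦ (gₙ x)ₙ` is a continuous linear map `X → c₀`; it is also weak-to-weak continuous, so
it maps weakly compact sets to weakly compact, hence norm-bounded, subsets of `c₀`. Thus the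
`gₙ` are uniformly bounded on weakly compact sets and `hₙ = gₙ / (n + 1) → 0` in the
compact-open topology of `C(X_w, ℝ)`. Since `X_w` is Ascoli, the compact set `{0} ∪ {hₙ}` is
equicontinuous; but a family of linear functionals that is equicontinuous for the weak topology
is controlled by finitely many functionals, so the `hₙ`, and with them the `fₙ`, lie in a
finite-dimensional space.
-/

open Bornology ZeroAtInfty

theorem isBounded_of_isCompact_weakSpace {𝕜 E : Type*} [RCLike 𝕜] [NormedAddCommGroup E]
    [NormedSpace 𝕜 E] {S : Set (WeakSpace 𝕜 E)} (hS : IsCompact S) :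
    IsBounded ((toWeakSpace 𝕜 E) ⁻¹' S) := by
  have hbdd : IsBounded (NormedSpace.inclusionInDoubleDualWeak 𝕜 E '' S) :=
    WeakDual.isBounded_iff_isVonNBounded.2
      ((hS.image (NormedSpace.inclusionInDoubleDualWeak 𝕜 E).continuous).isVonNBounded 𝕜)
  obtain ⟨R, hR⟩ := isBounded_iff_forall_norm_le.1 hbdd
  refine isBounded_iff_forall_norm_le.2 ⟨R, fun x hx => ?_⟩
  rw [← (NormedSpace.inclusionInDoubleDualLi 𝕜 (E := E)).norm_map x]
  exact hR _ ⟨x, hx, rfl⟩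

theorem ContinuousMap.tendsto_smul_of_forall_isCompact_bounded {ι Y 𝕜 E : Type*}
    [TopologicalSpace Y] [NormedField 𝕜] [NormedAddCommGroup E] [NormedSpace 𝕜 E]
    {l : Filter ι} {c : ι → 𝕜} (hc : Tendsto c l (𝓝 0)) (g : ι → C(Y, E))
    (hg : ∀ K : Set Y, IsCompact K → ∃ M, ∀ i, ∀ y ∈ K, ‖g i y‖ ≤ M) :
    Tendsto (fun i => c i • g i) l (𝓝 0) := by
  refine ContinuousMap.tendsto_iff_forall_isCompact_tendstoUniformlyOn.2 fun K hK => ?_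
  obtain ⟨M, hM⟩ := hg K hK
  have hcM : Tendsto (fun i => ‖c i‖ * M) l (𝓝 0) := by
    simpa using hc.norm.mul_const M
  refine Metric.tendstoUniformlyOn_iff.2 fun ε hε => ?_
  filter_upwards [hcM.eventually (gt_mem_nhds hε)] with i hi y hy
  calc dist ((0 : C(Y, E)) y) ((c i • g i) y) = ‖c i‖ * ‖g i y‖ := by
        simp [dist_eq_norm, norm_smul]
    _ ≤ ‖c i‖ * M := by gcongr; exact hM i y hy
    _ < ε := hi

theorem ContinuousLinearMap.mem_span_of_iInf_ker_le_ker {𝕜 X : Type*} [Field 𝕜]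
    [TopologicalSpace 𝕜] [IsTopologicalRing 𝕜] [AddCommGroup X] [Module 𝕜 X]
    [TopologicalSpace X] {s : Set (X →L[𝕜] 𝕜)} (hs : s.Finite) {φ : X →L[𝕜] 𝕜}
    (h : ⨅ ψ ∈ s, LinearMap.ker (ψ : X →ₗ[𝕜] 𝕜) ≤ LinearMap.ker (φ : X →ₗ[𝕜] 𝕜)) :
    φ ∈ Submodule.span 𝕜 s := by
  have := hs.to_subtype
  rw [← Submodule.apply_mem_span_image_iff_mem_span (f := ContinuousLinearMap.coeLM 𝕜)
    ContinuousLinearMap.coe_injective, image_eq_range]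
  refine _root_.mem_span_of_iInf_ker_le_ker fun x hx => h ?_
  simp only [Submodule.mem_iInf] at hx ⊢
  exact fun ψ hψ => hx ⟨ψ, hψ⟩

theorem finiteDimensional_span_of_forall_not_linearIndependent {K V : Type*} [DivisionRing K]
    [AddCommGroup V] [Module K V] {A : Set V}
    (h : ∀ f : ℕ → V, (∀ n, f n ∈ A) → ¬ LinearIndependent K f) :
    FiniteDimensional K (Submodule.span K A) := by
  obtain ⟨b, hbA, hbspan, hbli⟩ := exists_linearIndependent K A
  rw [← hbspan]
  have hb : b.Finite := by
    by_contra hinf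
    let e := Set.Infinite.natEmbedding b hinf
    exact h (fun n => e n) (fun n => hbA (e n).2) (hbli.comp e e.injective)
  exact FiniteDimensional.span_of_finite K hb

section WeakTopology

variable {X : Type*} [AddCommGroup X] [Module ℝ X] [TopologicalSpace X]

def equicontinuousSeqToC₀ (g : ℕ → X →L[ℝ] ℝ) (hg : Equicontinuous fun n => ⇑(g n))
    (hg0 : ∀ x, Tendsto (fun n => g n x) atTop (𝓝 0)) : X →L[ℝ] C₀(ℕ, ℝ) where
  toFun x :=
    { toFun := fun n => g n x
      continuous_toFun := continuous_of_discreteTopology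
      zero_at_infty' := by rw [cocompact_eq_cofinite, Nat.cofinite_eq_atTop]; exact hg0 x }
  map_add' x y := by ext n; simp
  map_smul' c x := by ext n; simp
  cont := by
    rw [ZeroAtInftyContinuousMap.isometry_toBCF.isUniformInducing.isInducing.continuous_iff,
      BoundedContinuousFunction.isInducing_coeFn.continuous_iff]
    exact equicontinuous_iff_continuous.1 hg

theorem exists_bound_of_equicontinuous_of_isCompact_weakSpace (g : ℕ → X →L[ℝ] ℝ)
    (hg : Equicontinuous fun n => ⇑(g n)) (hg0 : ∀ x, Tendsto (fun n => g n x) atTop (𝓝 0))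
    {C : Set (WeakSpace ℝ X)} (hC : IsCompact C) :
    ∃ M, ∀ n, ∀ x ∈ C, ‖g n x‖ ≤ M := by
  set T := equicontinuousSeqToC₀ g hg hg0
  obtain ⟨M, hM⟩ := isBounded_iff_forall_norm_le.1 <|
    isBounded_of_isCompact_weakSpace (hC.image (WeakSpace.map T).continuous)
  refine ⟨M, fun n x hx => ?_⟩
  calc ‖g n x‖ = ‖(T x).toBCF n‖ := rfl
    _ ≤ ‖T x‖ := by
      rw [← ZeroAtInftyContinuousMap.norm_toBCF_eq_norm]; exact (T x).toBCF.norm_coe_le_norm n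
    _ ≤ M := hM _ ⟨x, hx, rfl⟩

theorem finiteDimensional_span_of_equicontinuousAt_weakSpace {ι : Type*}
    (F : ι → X →L[ℝ] ℝ) (hF : EquicontinuousAt (fun i (x : WeakSpace ℝ X) => F i x) 0) :
    FiniteDimensional ℝ (Submodule.span ℝ (range F)) := by
  obtain ⟨W, hW, hWF⟩ :=
    eventually_iff_exists_mem.1 (Metric.equicontinuousAt_iff_right.1 hF 1 one_pos)
  obtain ⟨_, hB, hBW⟩ := (LinearMap.hasBasis_weakBilin (topDualPairing ℝ X).flip).mem_iff.1 hW
  obtain ⟨s, r, hr, rfl⟩ := (SeminormFamily.basisSets_iff _).1 hB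
  have hspan : ∀ i, F i ∈ Submodule.span ℝ (s : Set (X →L[ℝ] ℝ)) := fun i =>
    ContinuousLinearMap.mem_span_of_iInf_ker_le_ker s.finite_toSet fun x hx => by
      simp only [Submodule.mem_iInf, LinearMap.mem_ker, ContinuousLinearMap.coe_coe] at hx ⊢
      -- the whole line through `x` lies in the basic neighbourhood, where `|F i| < 1`
      by_contra hne
      have hmem : ((F i x)⁻¹ • x : WeakSpace ℝ X) ∈ W := hBW <|
        (Seminorm.mem_ball_zero _).2 <| Seminorm.finset_sup_apply_lt hr fun φ hφ => by
          change ‖φ ((F i x)⁻¹ • x)‖ < r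
          rwa [map_smul, hx φ hφ, smul_zero, norm_zero]
      have h0 : F i (0 : WeakSpace ℝ X) = 0 := map_zero (F i)
      have hlt := hWF _ hmem i
      simp [h0, map_smul, inv_mul_cancel₀ hne] at hlt
  have := FiniteDimensional.span_of_finite ℝ s.finite_toSet
  exact Submodule.finiteDimensional_of_le (Submodule.span_le.2 (range_subset_iff.2 hspan))

end WeakTopology

theorem statement6_general {X : Type*} [AddCommGroup X] [Module ℝ X] [TopologicalSpace X]
    (hc0 : C0Barrelled X) (hAsc : IsAscoli (WeakSpace ℝ X))
    (A : Set (X →L[ℝ] ℝ))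
    (hbdd : ∀ x : X, Bornology.IsBounded ((fun f : X →L[ℝ] ℝ => f x) '' A)) :
    FiniteDimensional ℝ (Submodule.span ℝ A) := by
  refine finiteDimensional_span_of_forall_not_linearIndependent fun f hfA hf => ?_
  set c : ℕ → ℝ := fun n => 1 / ((n : ℝ) + 1)
  have hc : Tendsto c atTop (𝓝 0) := tendsto_one_div_add_atTop_nhds_zero_nat
  have hc_ne : ∀ n, c n ≠ 0 := fun n => by positivity
  set g : ℕ → X →L[ℝ] ℝ := fun n => c n • f n
  have hg0 : ∀ x, Tendsto (fun n => g n x) atTop (𝓝 0) := fun x => by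
    obtain ⟨M, hM⟩ := isBounded_iff_forall_norm_le.1 (hbdd x)
    exact hc.zero_mul_isBoundedUnder_le (isBoundedUnder_of ⟨M, fun n => hM _ ⟨f n, hfA n, rfl⟩⟩)
  have hg := hc0 g hg0
  let toC : (X →L[ℝ] ℝ) → C(WeakSpace ℝ X, ℝ) := fun φ =>
    ⟨fun x => φ x, WeakBilin.eval_continuous _ φ⟩
  have hh : Tendsto (fun n => c n • toC (g n)) atTop (𝓝 0) :=
    ContinuousMap.tendsto_smul_of_forall_isCompact_bounded hc _ fun _ hK =>
      exists_bound_of_equicontinuous_of_isCompact_weakSpace g hg hg0 hK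
  have hequi : EquicontinuousAt (fun n (x : WeakSpace ℝ X) => (c n • g n) x) 0 :=
    (hAsc _ hh.isCompact_insert_range 0).comp fun n => ⟨_, mem_insert_of_mem _ (mem_range_self n)⟩
  have hfin := finiteDimensional_span_of_equicontinuousAt_weakSpace _ hequi
  let u : ℕ → ℝˣ := fun n => Units.mk0 (c n) (hc_ne n)
  have hli : LinearIndependent ℝ fun n => c n • g n := (hf.units_smul u).units_smul u
  exact Module.Finite.not_linearIndependent_of_infinite _ (linearIndependent_span hli)

/-- If a `c₀`-barrelled Hausdorff real locally convex space `X` is weakly Ascoli, then every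
`σ(X′,X)`-bounded subset of the dual spans a finite-dimensional subspace. -/
theorem statement6 {X : Type*} [AddCommGroup X] [Module ℝ X] [TopologicalSpace X]
    [IsTopologicalAddGroup X] [ContinuousSMul ℝ X] [LocallyConvexSpace ℝ X] [T2Space X]
    (hc0 : C0Barrelled X) (hAsc : IsAscoli (WeakSpace ℝ X))
    (A : Set (X →L[ℝ] ℝ))
    (hbdd : ∀ x : X, Bornology.IsBounded ((fun f : X →L[ℝ] ℝ => f x) '' A)) :
    FiniteDimensional ℝ (Submodule.span ℝ A) :=
  statement6_general hc0 hAsc A hbdd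
end

section
/- Let X be a Hausdorff real locally convex space that is c₀-barrelled and weakly Ascoli. Then X is linearly homeomorphic to a dense subspace of a product ℝ^Γ: there exist a set (index type) Γ and an injective continuous linear map e : X → ℝ^Γ (product topology) which is a topological embedding and has dense range (Γ may be taken to be a Hamel basis of the dual X′). -/
open Set Topology Filter

/-!
The weak topology of `X` is induced by evaluation at a Hamel basis `Γ` of the dual, and this
evaluation map `X → ℝ^Γ` has dense range because finitely many independent functionals take all
prescribed values. So it suffices that `X` carries its weak topology, i.e. that every continuous
seminorm `p` is weakly continuous. Let `D` be the set of functionals dominated by `p`; by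
Hahn–Banach `p = sup_{f ∈ D} |f|`. If `D` spans a finite-dimensional space, `p` is dominated by
finitely many `|f_i|`, hence weakly continuous. Otherwise take independent `f_n ∈ D`. Weakly
compact sets are `p`-bounded (Mackey), so `f_n / (n + 1) → 0` in `C(X_w, ℝ)`, and the Ascoli
property makes `{0} ∪ {f_n / (n + 1)}` equicontinuous at `0`. Then every `f_n` vanishes on a
finite intersection of kernels, so all of them lie in a finite-dimensional span: a contradiction.
-/

open scoped lp

section LinearAlgebra

variable {ι 𝕜 E : Type*} [Field 𝕜] [AddCommGroup E] [Module 𝕜 E] {v : ι → E →ₗ[𝕜] 𝕜}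

theorem LinearMap.surjective_pi_of_linearIndependent [Finite ι] (hv : LinearIndependent 𝕜 v) :
    Function.Surjective (LinearMap.pi v) := by
  classical
  have := Fintype.ofFinite ι
  rw [← LinearMap.range_eq_top]
  by_contra hne
  obtain ⟨φ, hφ0, hφ⟩ := Submodule.exists_le_ker_of_lt_top _ (lt_top_iff_ne_top.2 hne)
  have hφv : ∀ x, (∑ i, φ (Pi.single i 1) • v i) x = φ (LinearMap.pi v x) := fun x => by
    conv_rhs => rw [← Finset.univ_sum_single (LinearMap.pi v x)]
    simp only [map_sum, LinearMap.sum_apply, LinearMap.smul_apply, LinearMap.pi_apply, smul_eq_mul]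
    congr! 1 with i
    rw [mul_comm, ← smul_eq_mul, ← map_smul, ← Pi.single_smul, smul_eq_mul, mul_one]
  -- `φ` annihilates the range, so its coordinates give a linear relation between the `v i`.
  have hcomb : ∑ i, φ (Pi.single i 1) • v i = 0 :=
    LinearMap.ext fun x => (hφv x).trans (hφ ⟨x, rfl⟩)
  have hzero := Fintype.linearIndependent_iff.1 hv _ hcomb
  exact hφ0 (LinearMap.pi_ext' fun i => LinearMap.ext_ring (hzero i))

theorem LinearMap.denseRange_pi_of_linearIndependent [TopologicalSpace 𝕜]
    (hv : LinearIndependent 𝕜 v) : DenseRange (LinearMap.pi v) := by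
  intro y
  rw [mem_closure_iff_nhds]
  intro A hA
  rw [nhds_pi, Filter.mem_pi] at hA
  obtain ⟨I, hI, W, hW, hWA⟩ := hA
  have := hI.to_subtype
  obtain ⟨x, hx⟩ := surjective_pi_of_linearIndependent
    (hv.comp ((↑) : I → ι) Subtype.val_injective) fun i => y i
  refine ⟨LinearMap.pi v x, hWA fun i hi => ?_, x, rfl⟩
  have hxi : v i x = y i := congrFun hx ⟨i, hi⟩
  simpa [hxi] using mem_of_mem_nhds (hW i)

end LinearAlgebra

section WeakSpace

variable {𝕜 E : Type*} [Field 𝕜] [TopologicalSpace 𝕜] [IsTopologicalRing 𝕜]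
  [AddCommGroup E] [Module 𝕜 E] [TopologicalSpace E]

theorem WeakSpace.isInducing_pi_of_span_eq_top {ι : Type*} {v : ι → StrongDual 𝕜 E}
    (hv : Submodule.span 𝕜 (range v) = ⊤) :
    IsInducing fun (x : WeakSpace 𝕜 E) (i : ι) => v i x := by
  refine ⟨le_antisymm (continuous_iff_le_induced.1 <| continuous_pi fun i =>
    WeakBilin.eval_continuous _ (v i)) ?_⟩
  show _ ≤ TopologicalSpace.induced (fun x (f : StrongDual 𝕜 E) => f x) Pi.topologicalSpace
  rw [induced_to_pi, induced_to_pi]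
  refine le_iInf fun f => continuous_iff_le_induced.1 ?_
  let _ : TopologicalSpace (WeakSpace 𝕜 E) := ⨅ i, .induced (fun x => v i x) inferInstance
  induction (hv ▸ Submodule.mem_top : f ∈ Submodule.span 𝕜 (range v)) using
    Submodule.span_induction with
  | mem _ hf =>
    obtain ⟨i, rfl⟩ := hf
    exact continuous_iInf_dom continuous_induced_dom
  | zero => exact continuous_const
  | add _ _ _ _ hf hg => exact hf.add hg
  | smul c _ _ hf => exact hf.const_smul c

theorem WeakSpace.exists_finset_forall_eq_zero_subset {U : Set (WeakSpace 𝕜 E)}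
    (hU : U ∈ 𝓝 0) : ∃ s : Finset (StrongDual 𝕜 E), {x | ∀ f ∈ s, f x = 0} ⊆ U := by
  have hnhds : 𝓝 (0 : WeakSpace 𝕜 E) =
      comap (fun (x : WeakSpace 𝕜 E) (f : StrongDual 𝕜 E) => f x) (𝓝 fun f => f 0) :=
    nhds_induced _ _
  rw [hnhds, Filter.mem_comap, nhds_pi] at hU
  obtain ⟨t, ht, htU⟩ := hU
  obtain ⟨I, hI, W, hW, hWt⟩ := Filter.mem_pi.1 ht
  refine ⟨hI.toFinset, fun x hx => htU (hWt fun f hf => ?_)⟩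
  have hfx : f x = 0 := hx f (hI.mem_toFinset.2 hf)
  simpa [hfx] using mem_of_mem_nhds (hW f)

end WeakSpace

theorem WeakSpace.exists_finset_forall_mem_span {𝕜 E : Type*} [NontriviallyNormedField 𝕜]
    [AddCommGroup E] [Module 𝕜 E] [TopologicalSpace E] {U : Set (WeakSpace 𝕜 E)}
    (hU : U ∈ 𝓝 0) : ∃ s : Finset (StrongDual 𝕜 E), ∀ g : StrongDual 𝕜 E,
      (∃ C, ∀ x ∈ U, ‖g x‖ ≤ C) → g ∈ Submodule.span 𝕜 (s : Set (StrongDual 𝕜 E)) := by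
  obtain ⟨s, hsU⟩ := exists_finset_forall_eq_zero_subset hU
  refine ⟨s, fun g ⟨C, hC⟩ => ?_⟩
  have hker : ⨅ f : s, LinearMap.ker ((f : StrongDual 𝕜 E) : E →ₗ[𝕜] 𝕜) ≤
      LinearMap.ker (g : E →ₗ[𝕜] 𝕜) := by
    intro x hx
    simp only [Submodule.mem_iInf, LinearMap.mem_ker, ContinuousLinearMap.coe_coe] at hx ⊢
    by_contra hgx
    obtain ⟨c, hc⟩ := NormedField.exists_lt_norm 𝕜 (C / ‖g x‖)
    have hbound : ‖g (c • x)‖ ≤ C := hC _ (hsU fun f hf => by simp [hx ⟨f, hf⟩])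
    rw [map_smul, norm_smul] at hbound
    linarith [(div_lt_iff₀ (norm_pos_iff.2 hgx)).1 hc]
  have hrange : range (fun f : s => ((f : StrongDual 𝕜 E) : E →ₗ[𝕜] 𝕜)) =
      ContinuousLinearMap.coeLM 𝕜 '' (s : Set (StrongDual 𝕜 E)) := by
    ext; simp
  have hspan := mem_span_of_iInf_ker_le_ker hker
  rw [hrange, Submodule.span_image, Submodule.mem_map] at hspan
  obtain ⟨h, hh, hhg⟩ := hspan
  rwa [← ContinuousLinearMap.coe_injective hhg]

section LpOnePairing

variable {X ι : Type*} [AddCommGroup X] [Module ℝ X] {p : Seminorm ℝ X} {f : ι → X →ₗ[ℝ] ℝ}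

theorem lp.summable_norm_of_one (a : ℓ¹(ι, ℝ)) : Summable fun i => ‖a i‖ := by
  simpa using a.2.summable (by norm_num)

theorem lp.norm_eq_tsum_norm_of_one (a : ℓ¹(ι, ℝ)) : ‖a‖ = ∑' i, ‖a i‖ := by
  rw [lp.norm_eq_tsum_rpow (by norm_num)]
  simp

theorem summable_lp_one_mul (hf : ∀ i y, |f i y| ≤ p y) (a : ℓ¹(ι, ℝ)) (y : X) :
    Summable fun i => a i * f i y :=
  .of_norm_bounded ((lp.summable_norm_of_one a).mul_right (p y)) fun i => by
    rw [norm_mul]; exact mul_le_mul_of_nonneg_left (hf i y) (norm_nonneg _)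

theorem abs_tsum_lp_one_mul_le (hf : ∀ i y, |f i y| ≤ p y) (a : ℓ¹(ι, ℝ)) (y : X) :
    |∑' i, a i * f i y| ≤ ‖a‖ * p y := by
  rw [lp.norm_eq_tsum_norm_of_one, ← tsum_mul_right]
  refine (norm_tsum_le_tsum_norm (summable_lp_one_mul hf a y).norm).trans ?_
  refine Summable.tsum_le_tsum (fun i => ?_) (summable_lp_one_mul hf a y).norm
    ((lp.summable_norm_of_one a).mul_right (p y))
  rw [norm_mul]; exact mul_le_mul_of_nonneg_left (hf i y) (norm_nonneg _)

variable (f) in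
noncomputable def lpOnePairing (hf : ∀ i y, |f i y| ≤ p y) : ℓ¹(ι, ℝ) →ₗ[ℝ] X →ₗ[ℝ] ℝ :=
  LinearMap.mk₂ ℝ (fun a y => ∑' i, a i * f i y)
    (fun a b y => by
      simp only [lp.coeFn_add, Pi.add_apply, add_mul]
      exact (summable_lp_one_mul hf a y).tsum_add (summable_lp_one_mul hf b y))
    (fun c a y => by
      simp only [lp.coeFn_smul, Pi.smul_apply, smul_eq_mul, mul_assoc, tsum_mul_left])
    (fun a y z => by
      simp only [map_add, mul_add]
      exact (summable_lp_one_mul hf a y).tsum_add (summable_lp_one_mul hf a z))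
    (fun c a y => by simp only [map_smul, smul_eq_mul, mul_left_comm _ c, tsum_mul_left])

theorem lpOnePairing_apply (hf : ∀ i y, |f i y| ≤ p y) (a : ℓ¹(ι, ℝ)) (y : X) :
    lpOnePairing f hf a y = ∑' i, a i * f i y :=
  rfl

end LpOnePairing

section Seminorm

variable {X : Type*} [AddCommGroup X] [Module ℝ X] [TopologicalSpace X] {p : Seminorm ℝ X}

theorem LinearMap.continuous_of_abs_le_mul_seminorm [IsTopologicalAddGroup X]
    (hp : Continuous p) (f : X →ₗ[ℝ] ℝ) {C : ℝ} (hf : ∀ y, |f y| ≤ C * p y) : Continuous f := by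
  refine continuous_of_continuousAt_zero f ?_
  have hlim : Tendsto (fun y => C * p y) (𝓝 0) (𝓝 0) := by
    simpa using (hp.tendsto 0).const_mul C
  simpa [ContinuousAt] using squeeze_zero_norm hf hlim

theorem Seminorm.exists_strongDual_abs_le_eq [PolynormableSpace ℝ X] (hp : Continuous p)
    (x : X) : ∃ f : StrongDual ℝ X, (∀ y, |f y| ≤ p y) ∧ f x = p x := by
  rcases eq_or_ne x 0 with rfl | hx
  · exact ⟨0, fun y => by simp, by simp⟩
  let f₀ : Module.Dual ℝ (ℝ ∙ x) := p x • (LinearEquiv.coord ℝ X x hx : (ℝ ∙ x) →ₗ[ℝ] ℝ)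
  have hf₀ : ∀ y, f₀ y = LinearEquiv.coord ℝ X x hx y * p x := fun y => mul_comm _ _
  obtain ⟨f, hf, hfp⟩ := f₀.exists_continuous_extension_of_le_seminorm_real _ hp fun y => by
    rw [hf₀, ← LinearEquiv.coord_apply_smul ℝ X x hx y, map_smul_eq_mul, Real.norm_eq_abs]
    exact mul_le_mul_of_nonneg_right (le_abs_self _) (apply_nonneg p x)
  refine ⟨f, hfp, ?_⟩
  simpa [hf₀, LinearEquiv.coord_self] using hf ⟨x, Submodule.mem_span_singleton_self x⟩

/- Mackey's theorem for a single seminorm: Banach–Steinhaus on `ℓ¹(Q)`, applied to the functionals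
`a ↦ ∑ a_q f_q x` (`x ∈ Q`), where `f_q` is a functional norming `p` at `q`. -/
theorem Seminorm.bddAbove_image_of_forall_bddAbove_abs [IsTopologicalAddGroup X]
    [PolynormableSpace ℝ X] (hp : Continuous p) {Q : Set X}
    (hQ : ∀ f : StrongDual ℝ X, BddAbove ((fun x => |f x|) '' Q)) : BddAbove (p '' Q) := by
  classical
  choose f hfp hfx using fun q : Q => p.exists_strongDual_abs_le_eq hp q
  let B := lpOnePairing (fun q => (f q : X →ₗ[ℝ] ℝ)) hfp
  let g : Q → ℓ¹(Q, ℝ) →L[ℝ] ℝ := fun q => (B.flip q).mkContinuous (p q) fun a => by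
    rw [LinearMap.flip_apply, Real.norm_eq_abs, lpOnePairing_apply, mul_comm]
    exact abs_tsum_lp_one_mul_le hfp a q
  obtain ⟨C, hC⟩ := banach_steinhaus (g := g) fun a => by
    obtain ⟨C, hC⟩ := hQ ⟨B a, (B a).continuous_of_abs_le_mul_seminorm hp
      (abs_tsum_lp_one_mul_le hfp a)⟩
    exact ⟨C, fun q => hC ⟨q, q.2, rfl⟩⟩
  refine ⟨C, forall_mem_image.2 fun q hq => ?_⟩
  let e : ℓ¹(Q, ℝ) := lp.single 1 ⟨q, hq⟩ 1
  have hge : g ⟨q, hq⟩ e = p q := by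
    rw [LinearMap.mkContinuous_apply, LinearMap.flip_apply, lpOnePairing_apply,
      tsum_eq_single ⟨q, hq⟩ fun i hi => by simp [e, hi]]
    simp [e, hfx]
  calc p q = g ⟨q, hq⟩ e := hge.symm
    _ ≤ ‖g ⟨q, hq⟩‖ * ‖e‖ := (Real.le_norm_self _).trans ((g ⟨q, hq⟩).le_opNorm e)
    _ ≤ C := by rw [lp.norm_single (by norm_num), norm_one, mul_one]; exact hC _

end Seminorm

section WeakAscoli

variable {X : Type*} [AddCommGroup X] [Module ℝ X] [TopologicalSpace X]

def StrongDual.toWeakSpaceContinuousMap (f : StrongDual ℝ X) : C(WeakSpace ℝ X, ℝ) :=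
  ⟨fun x => f x, WeakBilin.eval_continuous _ f⟩

variable [PolynormableSpace ℝ X] {p : Seminorm ℝ X}

theorem Seminorm.continuous_weakSpace_of_forall_mem_span (hp : Continuous p) {ι : Type*}
    [Finite ι] {b : ι → StrongDual ℝ X} (hb : LinearIndependent ℝ b)
    (hD : ∀ f : StrongDual ℝ X, (∀ y, |f y| ≤ p y) → f ∈ Submodule.span ℝ (range b)) :
    Continuous fun x : WeakSpace ℝ X => p x := by
  have := Fintype.ofFinite ι
  have hb' : LinearIndependent ℝ fun i => (b i : X →ₗ[ℝ] ℝ) :=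
    hb.map' (ContinuousLinearMap.coeLM ℝ)
      (LinearMap.ker_eq_bot.2 ContinuousLinearMap.coe_injective)
  classical
  -- `χ` is dual to `b`, so a functional `∑ c i • b i` dominated by `p` has `|c i| ≤ p (χ i)`.
  choose χ hχ using fun i => LinearMap.surjective_pi_of_linearIndependent hb' (Pi.single i 1)
  have hbχ : ∀ i j, b j (χ i) = (Pi.single i 1 : ι → ℝ) j := fun i j => congrFun (hχ i) j
  have hbound : ∀ y : X, p y ≤ ∑ i, p (χ i) * |b i y| := by
    intro y
    obtain ⟨f, hfp, hfy⟩ := p.exists_strongDual_abs_le_eq hp y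
    obtain ⟨c, hc⟩ := (Submodule.mem_span_range_iff_exists_fun ℝ).1 (hD f hfp)
    have hcoef : ∀ i, c i = f (χ i) := fun i => by simp [← hc, hbχ, Pi.single_apply]
    calc p y = ∑ i, c i * b i y := by simp [← hfy, ← hc]
      _ ≤ ∑ i, p (χ i) * |b i y| := Finset.sum_le_sum fun i _ => by
          rw [hcoef]
          exact (le_abs_self _).trans
            (abs_mul (f (χ i)) _ ▸ mul_le_mul_of_nonneg_right (hfp _) (abs_nonneg _))
  let q : Seminorm ℝ (WeakSpace ℝ X) := p.comp ((toWeakSpace ℝ X).symm : WeakSpace ℝ X →ₗ[ℝ] X)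
  have hlim : Tendsto (fun x : WeakSpace ℝ X => ∑ i, p (χ i) * |b i x|) (𝓝 0) (𝓝 0) := by
    have : Continuous fun x : WeakSpace ℝ X => ∑ i, p (χ i) * |b i x| :=
      _root_.continuous_finsetSum _ fun i _ =>
        continuous_const.mul (WeakBilin.eval_continuous _ (b i)).abs
    have h0 : ∀ i, b i (0 : WeakSpace ℝ X) = 0 := fun i => map_zero (b i)
    simpa [h0] using this.tendsto 0
  have hq : ContinuousAt q 0 := by
    simpa [ContinuousAt] using squeeze_zero (fun x => apply_nonneg q x) (fun x => hbound x) hlim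
  exact Seminorm.continuous_of_continuousAt_zero hq

variable [IsTopologicalAddGroup X]

theorem tendsto_toWeakSpaceContinuousMap_smul (hp : Continuous p) {F : ℕ → StrongDual ℝ X}
    (hF : ∀ n y, |F n y| ≤ p y) {c : ℕ → ℝ} (hc : Tendsto c atTop (𝓝 0)) :
    Tendsto (fun n => (c n • F n).toWeakSpaceContinuousMap) atTop (𝓝 0) := by
  rw [ContinuousMap.tendsto_iff_forall_isCompact_tendstoUniformlyOn]
  intro Q hQ
  obtain ⟨C, hC⟩ := p.bddAbove_image_of_forall_bddAbove_abs hp (Q := Q) fun f =>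
    (hQ.image (WeakBilin.eval_continuous _ f).abs).bddAbove
  have hcC : Tendsto (fun n => |c n| * max C 0) atTop (𝓝 0) := by
    simpa using hc.abs.mul_const (max C 0)
  rw [Metric.tendstoUniformlyOn_iff]
  intro ε hε
  filter_upwards [hcC.eventually (gt_mem_nhds hε)] with n hn x hx
  calc dist ((0 : C(WeakSpace ℝ X, ℝ)) x) ((c n • F n).toWeakSpaceContinuousMap x)
      = |c n| * |F n x| := by
        change |0 - c n * F n x| = _
        rw [zero_sub, abs_neg, abs_mul]
    _ ≤ |c n| * max C 0 := by
        gcongr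
        exact (hF n x).trans ((hC ⟨x, hx, rfl⟩).trans (le_max_left C 0))
    _ < ε := hn

theorem IsAscoli.not_linearIndependent_of_forall_abs_le (hAsc : IsAscoli (WeakSpace ℝ X))
    (hp : Continuous p) {F : ℕ → StrongDual ℝ X} (hF : ∀ n y, |F n y| ≤ p y) :
    ¬ LinearIndependent ℝ F := by
  intro hli
  let c : ℕ → ℝ := fun n => 1 / ((n : ℝ) + 1)
  let φ : ℕ → C(WeakSpace ℝ X, ℝ) := fun n => (c n • F n).toWeakSpaceContinuousMap
  have hK : IsCompact (insert 0 (range φ)) := (tendsto_toWeakSpaceContinuousMap_smul hp hF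
    tendsto_one_div_add_atTop_nhds_zero_nat).isCompact_insert_range
  obtain ⟨s, hs⟩ := WeakSpace.exists_finset_forall_mem_span
    (Metric.equicontinuousAt_iff_right.1 (hAsc _ hK 0) 1 one_pos)
  have hmem : ∀ n, F n ∈ Submodule.span ℝ (s : Set (StrongDual ℝ X)) := fun n => by
    refine (Submodule.smul_mem_iff _ (s := c n) (by positivity)).1 (hs _ ⟨1, fun x hx => ?_⟩)
    have := hx ⟨φ n, mem_insert_of_mem _ ⟨n, rfl⟩⟩
    change |c n * F n 0 - c n * F n x| < 1 at this
    rw [map_zero, mul_zero, zero_sub, abs_neg] at this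
    exact this.le
  have := hli.finite_of_le_span_finite F s (range_subset_iff.2 hmem)
  exact not_finite ℕ

theorem IsAscoli.continuous_weakSpace_seminorm (hAsc : IsAscoli (WeakSpace ℝ X))
    (hp : Continuous p) : Continuous fun x : WeakSpace ℝ X => p x := by
  obtain ⟨B, hBD, hBspan, hBli⟩ :=
    exists_linearIndependent ℝ {f : StrongDual ℝ X | ∀ y, |f y| ≤ p y}
  have hBfin : B.Finite := by
    by_contra hinf
    let e := Set.Infinite.natEmbedding B hinf
    exact hAsc.not_linearIndependent_of_forall_abs_le hp (fun n => hBD (e n).2)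
      (hBli.comp e e.injective)
  have := hBfin.to_subtype
  refine p.continuous_weakSpace_of_forall_mem_span hp hBli fun f hf => ?_
  rw [Subtype.range_coe, hBspan]
  exact Submodule.subset_span hf

theorem IsAscoli.isEmbedding_toWeakSpace (hAsc : IsAscoli (WeakSpace ℝ X)) :
    IsEmbedding (toWeakSpace ℝ X) :=
  IsEmbedding.of_leftInverse (f := (toWeakSpace ℝ X).symm) (fun _ => rfl)
    ((PolynormableSpace.withSeminorms ℝ X).continuous_of_continuous_comp
      ((toWeakSpace ℝ X).symm : WeakSpace ℝ X →ₗ[ℝ] X)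
      fun p => hAsc.continuous_weakSpace_seminorm p.2)
    (toWeakSpaceCLM ℝ X).continuous

end WeakAscoli

universe u

theorem statement8_general {X : Type u} [AddCommGroup X] [Module ℝ X] [TopologicalSpace X]
    [IsTopologicalAddGroup X] [ContinuousSMul ℝ X] [LocallyConvexSpace ℝ X] [T2Space X]
    (hAsc : IsAscoli (WeakSpace ℝ X)) :
    ∃ (Γ : Type u) (e : X →ₗ[ℝ] (Γ → ℝ)),
      Function.Injective e ∧ Continuous e ∧ IsEmbedding e ∧ DenseRange e := by
  let b := Module.Basis.ofVectorSpace ℝ (StrongDual ℝ X)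
  let e : X →ₗ[ℝ] (_ → ℝ) := LinearMap.pi fun i => (b i : X →ₗ[ℝ] ℝ)
  have hemb : IsEmbedding e :=
    ((WeakSpace.isInducing_pi_of_span_eq_top b.span_eq).comp
      hAsc.isEmbedding_toWeakSpace.isInducing).isEmbedding
  have hdense : DenseRange e := LinearMap.denseRange_pi_of_linearIndependent
    (b.linearIndependent.map' (ContinuousLinearMap.coeLM ℝ)
      (LinearMap.ker_eq_bot.2 ContinuousLinearMap.coe_injective))
  exact ⟨_, e, hemb.injective, hemb.continuous, hemb, hdense⟩

/-- If a `c₀`-barrelled Hausdorff real locally convex space `X` is weakly Ascoli, then `X` is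
linearly homeomorphic to a dense subspace of a product `ℝ^Γ`. -/
theorem statement8 {X : Type u} [AddCommGroup X] [Module ℝ X] [TopologicalSpace X]
    [IsTopologicalAddGroup X] [ContinuousSMul ℝ X] [LocallyConvexSpace ℝ X] [T2Space X]
    (hc0 : C0Barrelled X) (hAsc : IsAscoli (WeakSpace ℝ X)) :
    ∃ (Γ : Type u) (e : X →ₗ[ℝ] (Γ → ℝ)),
      Function.Injective e ∧ Continuous e ∧ IsEmbedding e ∧ DenseRange e :=
  statement8_general hAsc
end

section
/- Let X be a Hausdorff real locally convex space that is weakly Ascoli. Then X is c₀-barrelled if and only if X is barrelled. -/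
/-!
Barrelled spaces are `c₀`-barrelled by the Banach–Steinhaus theorem. Conversely, let `p` be a
lower semicontinuous seminorm and `K` the set of continuous functionals dominated by `p`. By
Hahn–Banach, `p` vanishes on the common kernel of any finite set spanning `K`, so if such a set
exists, `p` factors through a continuous map into a finite-dimensional space and is continuous.
Otherwise `K` contains a linearly independent sequence `uₙ`. The functionals `uₙ / (n + 1)` tend
to zero pointwise, hence are equicontinuous; equicontinuous families are uniformly bounded on
weakly compact sets (Baire's theorem on the polar, which is compact by Tychonoff), so
`uₙ / (n + 1)²` tends to zero in `C(X_w, ℝ)`. By the Ascoli property these functions are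
equicontinuous on `X_w`, so all `uₙ` are bounded on one weak neighbourhood of zero and therefore
lie in the span of the finitely many functionals defining it, which is impossible.
-/

open Set Topology Filter

theorem exists_forall_abs_le_of_isCompact_of_convex {ι : Type*} {S : Set (ι → ℝ)}
    (hS : IsCompact S) (hSc : Convex ℝ S) {C : Set ι} (hC : ∀ g ∈ S, ∃ M, ∀ i ∈ C, |g i| ≤ M) :
    ∃ M, ∀ g ∈ S, ∀ i ∈ C, |g i| ≤ M := by
  rcases S.eq_empty_or_nonempty with rfl | hne
  · exact ⟨0, by simp⟩
  have : CompactSpace S := isCompact_iff_compactSpace.1 hS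
  have : Nonempty S := hne.to_subtype
  set A : ℕ → Set (ι → ℝ) := fun m => {g | ∀ i ∈ C, |g i| ≤ m}
  have hA : ∀ m, IsClosed (A m) := fun m => by
    simp only [A, ofPred_forall]
    exact isClosed_biInter fun i _ => isClosed_le (continuous_apply i).abs continuous_const
  have hcover : ⋃ m, ((↑) : S → ι → ℝ) ⁻¹' A m = univ := by
    refine eq_univ_of_forall fun g => mem_iUnion.2 ?_
    obtain ⟨M, hM⟩ := hC g g.2
    obtain ⟨m, hm⟩ := exists_nat_ge M
    exact ⟨m, fun i hi => (hM i hi).trans hm⟩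
  obtain ⟨m, ⟨g₀, hg₀S⟩, hg₀⟩ :=
    nonempty_interior_of_iUnion_of_closed (fun m => (hA m).preimage continuous_subtype_val) hcover
  have hg₀m : g₀ ∈ A m := interior_subset (s := Subtype.val ⁻¹' A m) hg₀
  obtain ⟨W, hW, hWA⟩ := mem_nhds_subtype S ⟨g₀, hg₀S⟩ _ |>.1 (mem_interior_iff_mem_nhds.1 hg₀)
  -- tube lemma: one contraction ratio towards `g₀` works for all of the compact set `S`
  have htube : ∀ᶠ t in 𝓝 (0 : ℝ), ∀ g ∈ S, g₀ + t • (g - g₀) ∈ W := by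
    refine hS.eventually_forall_of_forall_eventually fun g _ => ?_
    have hcont : Continuous fun z : ℝ × (ι → ℝ) => g₀ + z.1 • (z.2 - g₀) := by
      fun_prop
    exact hcont.continuousAt.preimage_mem_nhds (by simpa using hW)
  obtain ⟨n, hn⟩ := (tendsto_one_div_add_atTop_nhds_zero_nat.eventually htube).exists
  refine ⟨(2 * n + 3) * m, fun g hg i hi => ?_⟩
  set t : ℝ := 1 / (n + 1)
  have ht : t ∈ Icc (0 : ℝ) 1 := ⟨by positivity, by rw [div_le_one (by positivity)]; linarith⟩
  have h₁ : |g₀ i + t * (g i - g₀ i)| ≤ m :=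
    @hWA ⟨_, hSc.add_smul_sub_mem hg₀S hg ht⟩ (hn g hg) i hi
  have h₀ : |g₀ i| ≤ m := hg₀m i hi
  have hgi : g i = g₀ i + (n + 1) * ((g₀ i + t * (g i - g₀ i)) - g₀ i) := by
    simp only [t]; field_simp; ring
  rw [hgi]
  calc _ ≤ |g₀ i| + (n + 1) * (|g₀ i + t * (g i - g₀ i)| + |g₀ i|) := by
        grw [abs_add_le, abs_mul, abs_of_pos (by positivity : (0 : ℝ) < n + 1), abs_sub]
    _ ≤ m + (n + 1) * (m + m) := by gcongr
    _ = (2 * n + 3) * m := by ring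

theorem exists_linearIndependent_seq_of_forall_not_subset_span {K V : Type*} [DivisionRing K]
    [AddCommGroup V] [Module K V] {s : Set V}
    (h : ∀ F : Finset V, ¬s ⊆ Submodule.span K (F : Set V)) :
    ∃ u : ℕ → V, (∀ n, u n ∈ s) ∧ LinearIndependent K u := by
  obtain ⟨b, hbs, hspan, hli⟩ := exists_linearIndependent K s
  have hinf : b.Infinite := fun hfin =>
    h hfin.toFinset (by rw [hfin.coe_toFinset, hspan]; exact Submodule.subset_span)
  exact ⟨fun n => hinf.natEmbedding _ n, fun n => hbs (hinf.natEmbedding _ n).2,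
    hli.comp _ (hinf.natEmbedding _).injective⟩

theorem EquicontinuousAt.exists_mem_nhds_abs_le_one {ι Y : Type*} [TopologicalSpace Y] [Zero Y]
    {F : ι → Y → ℝ} (hF : EquicontinuousAt F 0) (h0 : ∀ i, F i 0 = 0) :
    ∃ U ∈ 𝓝 (0 : Y), ∀ i, ∀ x ∈ U, |F i x| ≤ 1 :=
  ⟨_, Metric.equicontinuousAt_iff_right.1 hF 1 one_pos, fun i x hx => by
    simpa [h0, abs_sub_comm] using (hx i).le⟩

theorem Seminorm.exists_abs_le_lt_of_lowerSemicontinuous {E : Type*} [AddCommGroup E]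
    [Module ℝ E] [TopologicalSpace E] [IsTopologicalAddGroup E] [ContinuousSMul ℝ E]
    [LocallyConvexSpace ℝ E] (p : Seminorm ℝ E) (hp : LowerSemicontinuous p) {x : E} {r : ℝ}
    (hr : r < p x) : ∃ f : E →L[ℝ] ℝ, (∀ y, |f y| ≤ p y) ∧ r < f x := by
  obtain ⟨a, hra, hax⟩ := exists_between hr
  obtain ⟨l, c, hle, hlx⟩ := p.convexOn.exists_affine_le_of_lt (𝕜 := ℝ) (mem_univ x) hax
    isClosed_univ (hp.lowerSemicontinuousOn univ)
  have haff : ∀ y, l y + c ≤ p y := fun y => by simpa using hle ⟨y, mem_univ y⟩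
  have hc : c ≤ 0 := by simpa using haff 0
  have hlin : ∀ y, l y ≤ p y := by
    intro y
    by_contra! hy
    obtain ⟨n, hn⟩ := exists_nat_gt (-c / (l y - p y))
    rw [div_lt_iff₀ (by linarith)] at hn
    have := haff ((n : ℝ) • y)
    rw [map_smul, map_smul_eq_mul, smul_eq_mul, Real.norm_natCast] at this
    linarith [mul_sub (n : ℝ) (l y) (p y)]
  refine ⟨l, fun y => abs_le.2 ⟨?_, hlin y⟩, ?_⟩
  · exact neg_le.1 (by simpa using hlin (-y))
  · have : l x + c = a := by simpa using hlx
    linarith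

theorem Seminorm.continuous_of_finiteDimensional {E : Type*} [AddCommGroup E] [Module ℝ E]
    [TopologicalSpace E] [IsTopologicalAddGroup E] [ContinuousSMul ℝ E] [T2Space E]
    [FiniteDimensional ℝ E] (p : Seminorm ℝ E) : Continuous p := by
  let b := Module.finBasis ℝ E
  let h : E → ℝ := fun x => ∑ j, |b.repr x j| * p (b j)
  have hh : Continuous h := _root_.continuous_finsetSum _ fun j _ =>
    (LinearMap.continuous_of_finiteDimensional (b.coord j)).abs.mul continuous_const
  have hle : ∀ x, p x ≤ h x := fun x =>
    calc p x = p (∑ j, b.repr x j • b j) := by rw [b.sum_repr]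
      _ ≤ ∑ j, p (b.repr x j • b j) :=
        Finset.le_sum_of_subadditive p (map_zero p).le (map_add_le_add p) _ _
      _ = h x := by simp [h, map_smul_eq_mul]
  refine Seminorm.continuous_of_continuousAt_zero ?_
  rw [ContinuousAt, map_zero]
  exact squeeze_zero (fun x => apply_nonneg p x) hle (by simpa [h] using hh.tendsto 0)

theorem Seminorm.continuous_of_eq_zero_on_ker {E F : Type*} [AddCommGroup E] [Module ℝ E]
    [TopologicalSpace E] [AddCommGroup F] [Module ℝ F] [TopologicalSpace F]
    [IsTopologicalAddGroup F] [ContinuousSMul ℝ F] [T2Space F] [FiniteDimensional ℝ F]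
    (Φ : E →L[ℝ] F) (p : Seminorm ℝ E) (hp : ∀ x, Φ x = 0 → p x = 0) : Continuous p := by
  let Φ' := (Φ : E →ₗ[ℝ] F).rangeRestrict
  obtain ⟨σ, hσ⟩ := Φ'.exists_rightInverse_of_surjective (LinearMap.range_rangeRestrict _)
  have hfac : ⇑p = p.comp σ ∘ Φ' := by
    ext x
    have hker : Φ (x - σ (Φ' x)) = 0 := by
      have := congrArg Subtype.val (LinearMap.congr_fun hσ (Φ' x))
      simpa [Φ', sub_eq_zero] using this.symm
    have := abs_sub_map_le_sub p x (σ (Φ' x))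
    rwa [hp _ hker, abs_nonpos_iff, sub_eq_zero] at this
  rw [hfac]
  exact (p.comp σ).continuous_of_finiteDimensional.comp (Φ.continuous.subtype_mk _)

section

variable {X : Type*} [AddCommGroup X] [Module ℝ X] [TopologicalSpace X]

theorem WeakSpace.exists_finset_forall_mem_span_of_abs_le {V : Set (WeakSpace ℝ X)}
    (hV : V ∈ 𝓝 0) :
    ∃ I : Finset (X →L[ℝ] ℝ), ∀ (f : X →L[ℝ] ℝ) (c : ℝ), (∀ x ∈ V, |f x| ≤ c) →
      f ∈ Submodule.span ℝ (I : Set (X →L[ℝ] ℝ)) := by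
  obtain ⟨s, hs, hsV⟩ := (LinearMap.hasBasis_weakBilin (topDualPairing ℝ X).flip).mem_iff.1 hV
  obtain ⟨I, r, hr, rfl⟩ := (SeminormFamily.basisSets_iff _).1 hs
  refine ⟨I, fun f c hf => ?_⟩
  have hker : ⨅ g : I, LinearMap.ker ((g : X →L[ℝ] ℝ) : X →ₗ[ℝ] ℝ) ≤
      LinearMap.ker (f : X →ₗ[ℝ] ℝ) := by
    intro x hx
    simp only [Submodule.mem_iInf, LinearMap.mem_ker, ContinuousLinearMap.coe_coe] at hx ⊢
    have hsup : (I.sup (topDualPairing ℝ X).flip.toSeminormFamily) x = 0 :=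
      le_antisymm (Seminorm.finset_sup_apply_le le_rfl fun g hg => by
        simp [LinearMap.toSeminormFamily_apply, hx ⟨g, hg⟩]) (apply_nonneg _ _)
    -- all multiples of `x` lie in `V`, so the bounded `f` must vanish at `x`
    have hbdd : ∀ t : ℝ, |t| * |f x| ≤ c := fun t => by
      have hball : t • x ∈ (I.sup (topDualPairing ℝ X).flip.toSeminormFamily).ball (0 : X) r := by
        rw [Seminorm.mem_ball_zero, map_smul_eq_mul, hsup, mul_zero]; exact hr
      have := hf (t • x) (hsV hball)
      rwa [map_smul, smul_eq_mul, abs_mul] at this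
    by_contra hfx
    have := hbdd ((|c| + 1) / |f x|)
    rw [abs_of_nonneg (by positivity), div_mul_cancel₀ _ (abs_ne_zero.2 hfx)] at this
    linarith [le_abs_self c]
  have hmem := mem_span_of_iInf_ker_le_ker hker
  have hrange : range (fun g : I => ((g : X →L[ℝ] ℝ) : X →ₗ[ℝ] ℝ)) =
      ContinuousLinearMap.coeLM ℝ '' (I : Set (X →L[ℝ] ℝ)) := by
    ext; simp
  rw [hrange, Submodule.span_image, Submodule.mem_map] at hmem
  obtain ⟨g, hg, hgf⟩ := hmem
  rwa [← ContinuousLinearMap.coe_inj.1 hgf]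

variable [IsTopologicalAddGroup X] [ContinuousSMul ℝ X]

theorem LinearMap.continuous_of_abs_le_one {φ : X →ₗ[ℝ] ℝ} {U : Set X} (hU : U ∈ 𝓝 0)
    (hφ : ∀ x ∈ U, |φ x| ≤ 1) : Continuous φ := by
  have : Continuous φ.toSeminorm :=
    Seminorm.continuous' (r := 1) (mem_of_superset hU fun x hx => by simpa using hφ x hx)
  refine continuous_of_continuousAt_zero φ ?_
  rw [ContinuousAt, map_zero, tendsto_zero_iff_norm_tendsto_zero]
  simpa [LinearMap.coe_toSeminorm] using this.tendsto 0

theorem exists_forall_abs_le_of_isCompact_weakSpace {U : Set X} (hU : U ∈ 𝓝 0)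
    {C : Set (WeakSpace ℝ X)} (hC : IsCompact C) :
    ∃ M, ∀ f : X →L[ℝ] ℝ, (∀ x ∈ U, |f x| ≤ 1) → ∀ x ∈ C, |f x| ≤ M := by
  set S : Set (X → ℝ) := range ((↑) : (X →ₗ[ℝ] ℝ) → X → ℝ) ∩ {g | ∀ x ∈ U, |g x| ≤ 1}
  have hbox : ∀ x : X, ∃ c : ℝ, ∀ g ∈ S, |g x| ≤ c := by
    intro x
    have : Tendsto (fun n : ℕ => (1 / ((n : ℝ) + 1)) • x) atTop (𝓝 0) := by
      simpa using (tendsto_one_div_add_atTop_nhds_zero_nat (𝕜 := ℝ)).smul_const x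
    obtain ⟨n, hn⟩ := (this.eventually hU).exists
    refine ⟨n + 1, ?_⟩
    rintro _ ⟨⟨φ, rfl⟩, hφ⟩
    have := hφ _ hn
    rw [map_smul, smul_eq_mul, abs_mul, abs_of_pos (by positivity), one_div,
      inv_mul_le_iff₀ (by positivity), mul_one] at this
    exact this
  choose c hc using hbox
  have hclosed : IsClosed {g : X → ℝ | ∀ x ∈ U, |g x| ≤ 1} := by
    simp only [ofPred_forall]
    exact isClosed_biInter fun x _ => isClosed_le (continuous_apply x).abs continuous_const
  have hS : IsCompact S :=
    (isCompact_univ_pi fun x => isCompact_Icc (a := -c x) (b := c x)).of_isClosed_subset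
      ((LinearMap.isClosed_range_coe _ _ _).inter hclosed) fun g hg x _ => abs_le.1 (hc x g hg)
  have hSc : Convex ℝ S := by
    rintro _ ⟨⟨φ, rfl⟩, hφ⟩ _ ⟨⟨ψ, rfl⟩, hψ⟩ a b ha hb hab
    refine ⟨⟨a • φ + b • ψ, rfl⟩, fun x hx => ?_⟩
    calc |a * φ x + b * ψ x| ≤ a * |φ x| + b * |ψ x| := by
          refine (abs_add_le _ _).trans_eq ?_
          rw [abs_mul, abs_mul, abs_of_nonneg ha, abs_of_nonneg hb]
      _ ≤ a * 1 + b * 1 := by gcongr <;> simp_all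
      _ = 1 := by rw [mul_one, mul_one, hab]
  obtain ⟨M, hM⟩ := exists_forall_abs_le_of_isCompact_of_convex hS hSc (C := C) <| by
    rintro _ ⟨⟨φ, rfl⟩, hφ⟩
    let f : X →L[ℝ] ℝ := ⟨φ, φ.continuous_of_abs_le_one hU hφ⟩
    have hf : Continuous fun x : WeakSpace ℝ X => f x :=
      WeakBilin.eval_continuous (topDualPairing ℝ X).flip f
    obtain ⟨M, hM⟩ := hC.exists_bound_of_continuousOn hf.continuousOn
    exact ⟨M, fun x hx => hM x hx⟩
  exact ⟨M, fun f hf => hM f ⟨⟨f, rfl⟩, hf⟩⟩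

theorem tendsto_damped_of_abs_le_one_on_nhds {v : ℕ → X →L[ℝ] ℝ} {U : Set X} (hU : U ∈ 𝓝 0)
    (hUv : ∀ n, ∀ x ∈ U, |v n x| ≤ 1) {w : ℕ → C(WeakSpace ℝ X, ℝ)}
    (hw : ∀ n x, w n x = ((n : ℝ) + 1)⁻¹ * v n x) : Tendsto w atTop (𝓝 0) := by
  rw [ContinuousMap.tendsto_iff_forall_isCompact_tendstoUniformlyOn]
  intro C hC
  obtain ⟨M, hM⟩ := exists_forall_abs_le_of_isCompact_weakSpace hU hC
  rw [Metric.tendstoUniformlyOn_iff]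
  intro ε hε
  have hdecay : Tendsto (fun n : ℕ => ((n : ℝ) + 1)⁻¹ * M) atTop (𝓝 0) := by
    simpa using (tendsto_one_div_add_atTop_nhds_zero_nat (𝕜 := ℝ)).mul_const M
  filter_upwards [hdecay.eventually (gt_mem_nhds hε)] with n hn x hx
  calc dist 0 (w n x) = ((n : ℝ) + 1)⁻¹ * |v n x| := by
        rw [hw, dist_zero_left, Real.norm_eq_abs, abs_mul, abs_of_pos (by positivity)]
    _ ≤ ((n : ℝ) + 1)⁻¹ * M := by gcongr; exact hM (v n) (hUv n) x hx
    _ < ε := hn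

theorem Seminorm.continuous_of_forall_abs_le_mem_span [LocallyConvexSpace ℝ X]
    (p : Seminorm ℝ X) (hp : LowerSemicontinuous p) (F : Finset (X →L[ℝ] ℝ))
    (hF : ∀ f : X →L[ℝ] ℝ, (∀ x, |f x| ≤ p x) → f ∈ Submodule.span ℝ (F : Set (X →L[ℝ] ℝ))) :
    Continuous p := by
  refine p.continuous_of_eq_zero_on_ker (.pi fun f : F => (f : X →L[ℝ] ℝ)) fun x hx => ?_
  refine le_antisymm (not_lt.1 fun hpos => ?_) (apply_nonneg p x)
  obtain ⟨g, hgp, hgx⟩ := p.exists_abs_le_lt_of_lowerSemicontinuous hp hpos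
  have hspan : Submodule.span ℝ (F : Set (X →L[ℝ] ℝ)) ≤
      LinearMap.ker ((LinearMap.applyₗ x).comp (ContinuousLinearMap.coeLM ℝ)) :=
    Submodule.span_le.2 fun f hf => congrFun hx ⟨f, hf⟩
  exact hgx.ne' (hspan (hF g hgp))

theorem C0Barrelled.exists_finset_forall_abs_le_mem_span (hc0 : C0Barrelled X)
    (hAsc : IsAscoli (WeakSpace ℝ X)) (p : X → ℝ) :
    ∃ F : Finset (X →L[ℝ] ℝ), ∀ f : X →L[ℝ] ℝ, (∀ x, |f x| ≤ p x) →
      f ∈ Submodule.span ℝ (F : Set (X →L[ℝ] ℝ)) := by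
  by_contra! h
  obtain ⟨u, hup, hli⟩ := exists_linearIndependent_seq_of_forall_not_subset_span
    (s := {f : X →L[ℝ] ℝ | ∀ x, |f x| ≤ p x}) (K := ℝ) fun F hF =>
      let ⟨_, hfp, hf⟩ := h F; hf (hF hfp)
  have hdecay : Tendsto (fun n : ℕ => ((n : ℝ) + 1)⁻¹) atTop (𝓝 0) := by
    simpa using tendsto_one_div_add_atTop_nhds_zero_nat (𝕜 := ℝ)
  let v : ℕ → X →L[ℝ] ℝ := fun n => ((n : ℝ) + 1)⁻¹ • u n
  have hv : ∀ x, Tendsto (fun n => v n x) atTop (𝓝 0) := fun x => by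
    refine squeeze_zero_norm (fun n => ?_) (by simpa using hdecay.mul_const (p x))
    rw [show v n x = ((n : ℝ) + 1)⁻¹ * u n x from rfl, norm_mul, Real.norm_eq_abs,
      Real.norm_eq_abs, abs_of_pos (by positivity)]
    exact mul_le_mul_of_nonneg_left (hup n x) (by positivity)
  obtain ⟨U, hU, hUv⟩ := (hc0 v hv 0).exists_mem_nhds_abs_le_one fun n => map_zero (v n)
  let w : ℕ → C(WeakSpace ℝ X, ℝ) := fun n =>
    ⟨fun x => ((n : ℝ) + 1)⁻¹ * v n x,
      continuous_const.mul (WeakBilin.eval_continuous (topDualPairing ℝ X).flip (v n))⟩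
  have hw : Tendsto w atTop (𝓝 0) := tendsto_damped_of_abs_le_one_on_nhds hU hUv fun _ _ => rfl
  have hw0 : ∀ f : ↥(insert 0 (range w)), (f : C(WeakSpace ℝ X, ℝ)) 0 = 0 := by
    rintro ⟨f, rfl | ⟨n, rfl⟩⟩
    · rfl
    · show ((n : ℝ) + 1)⁻¹ * v n (0 : X) = 0
      rw [map_zero, mul_zero]
  obtain ⟨V, hV, hVw⟩ := (hAsc _ hw.isCompact_insert_range 0).exists_mem_nhds_abs_le_one hw0
  obtain ⟨I, hI⟩ := WeakSpace.exists_finset_forall_mem_span_of_abs_le hV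
  have hspan : ∀ n, u n ∈ Submodule.span ℝ (I : Set (X →L[ℝ] ℝ)) := fun n =>
    hI (u n) (((n : ℝ) + 1) ^ 2) fun x hx => by
      have hwx : |((n : ℝ) + 1)⁻¹ * (((n : ℝ) + 1)⁻¹ * u n x)| ≤ 1 :=
        hVw ⟨w n, mem_insert_of_mem _ (mem_range_self n)⟩ x hx
      rwa [← mul_assoc, ← mul_inv, ← sq, abs_mul, abs_of_pos (by positivity),
        inv_mul_le_iff₀ (by positivity), mul_one] at hwx
  exact (hli.finite_of_le_span_finite u I (range_subset_iff.2 hspan)).false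

theorem C0Barrelled.of_barrelledSpace [BarrelledSpace ℝ X] : C0Barrelled X := by
  intro u hu
  let := IsTopologicalAddGroup.rightUniformSpace X
  have := isUniformAddGroup_of_addCommGroup (G := X)
  exact ((norm_withSeminorms ℝ ℝ).banach_steinhaus (𝓕 := u)
    fun _ x => (hu x).norm.bddAbove_range).equicontinuous

end

theorem statement11_general {X : Type*} [AddCommGroup X] [Module ℝ X] [TopologicalSpace X]
    [IsTopologicalAddGroup X] [ContinuousSMul ℝ X] [LocallyConvexSpace ℝ X]
    (hAsc : IsAscoli (WeakSpace ℝ X)) :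
    C0Barrelled X ↔ BarrelledSpace ℝ X := by
  refine ⟨fun hc0 => ⟨fun p hp => ?_⟩, fun _ => .of_barrelledSpace⟩
  obtain ⟨F, hF⟩ := hc0.exists_finset_forall_abs_le_mem_span hAsc p
  exact p.continuous_of_forall_abs_le_mem_span hp F hF

/-- A weakly Ascoli Hausdorff real locally convex space `X` is `c₀`-barrelled if and only if
it is barrelled. -/
theorem statement11 {X : Type*} [AddCommGroup X] [Module ℝ X] [TopologicalSpace X]
    [IsTopologicalAddGroup X] [ContinuousSMul ℝ X] [LocallyConvexSpace ℝ X] [T2Space X]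
    (hAsc : IsAscoli (WeakSpace ℝ X)) :
    C0Barrelled X ↔ BarrelledSpace ℝ X :=
  statement11_general hAsc
end

section
/- Let X be a completely regular Hausdorff space. Denote by C_k(X) the space C(X,ℝ) of continuous real-valued functions with the compact-open topology, and by C_p(X) the same space with the topology of pointwise convergence. Then the following are equivalent: (i) C_k(X) is a barrelled locally convex space and is weakly Ascoli; (ii) C_p(X) is a barrelled locally convex space and is an Ascoli space. -/
/-!
If either side holds, every compact subset of `X` is finite. Then the pointwise and the
compact-open topologies on `C(X, ℝ)` coincide, and so does the weak topology, which lies between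
them; both properties transfer along the identity.

If `C_p(X)` is barrelled and `K ⊆ X` is compact, the seminorm `f ↦ sup_K |f|` is lower
semicontinuous on `C_p(X)`, hence continuous, hence bounded on a neighbourhood of `0` cut out by
finitely many points `F`; a function that is `1` at a point of `K \ F` and `0` on `F` then shows
`K ⊆ F`.

If `C_k(X)` is weakly Ascoli and `xₙ` is an injective sequence in a compact `K`, the functions
`gₙ f = max 0 (|f xₙ| - n)` vanish eventually on every weakly compact set (such sets are
uniformly bounded on `K`), so `gₙ → 0` and `(gₙ)` is equicontinuous at `0`. But every weak
neighbourhood of `0` contains a finite-codimensional subspace, and since the evaluations at the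
`xₙ` are linearly independent, it contains some `f` with `f xₙ = n + 1`, where `gₙ f = 1`.
-/

open Set Topology

/-- `C_p(X)`: the space `C(X,ℝ)` equipped with the topology of pointwise convergence. -/
def Cp (X : Type*) [TopologicalSpace X] : Type _ := C(X, ℝ)

/-- The underlying continuous map of an element of `Cp X`. -/
def Cp.toCM {X : Type*} [TopologicalSpace X] (f : Cp X) : C(X, ℝ) := f

instance (X : Type*) [TopologicalSpace X] : TopologicalSpace (Cp X) :=
  TopologicalSpace.induced (fun f : Cp X => (f.toCM : X → ℝ)) Pi.topologicalSpace

instance (X : Type*) [TopologicalSpace X] : AddCommGroup (Cp X) :=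
  inferInstanceAs (AddCommGroup C(X, ℝ))

noncomputable instance (X : Type*) [TopologicalSpace X] : Module ℝ (Cp X) :=
  inferInstanceAs (Module ℝ C(X, ℝ))

open Filter Function

theorem Topology.IsInducing.exists_finite_of_mem_nhds_pi {E ι : Type*} {α : ι → Type*}
    [TopologicalSpace E] [∀ i, TopologicalSpace (α i)] {φ : E → ∀ i, α i} (hφ : IsInducing φ)
    {x : E} {U : Set E} (hU : U ∈ 𝓝 x) :
    ∃ I : Set ι, I.Finite ∧ ∀ y, (∀ i ∈ I, φ y i = φ x i) → y ∈ U := by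
  rw [hφ.nhds_eq_comap, nhds_pi, mem_comap] at hU
  obtain ⟨V, hV, hVU⟩ := hU
  obtain ⟨I, hI, t, ht, hIt⟩ := mem_pi.mp hV
  exact ⟨I, hI, fun y hy => hVU <| hIt fun i hi => (hy i hi).symm ▸ mem_of_mem_nhds (ht i)⟩

theorem WeakBilin.exists_finite_of_mem_nhds_zero {𝕜 E F : Type*} [CommRing 𝕜] [TopologicalSpace 𝕜]
    [AddCommGroup E] [Module 𝕜 E] [AddCommGroup F] [Module 𝕜 F] {B : E →ₗ[𝕜] F →ₗ[𝕜] 𝕜}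
    {U : Set (WeakBilin B)} (hU : U ∈ 𝓝 0) :
    ∃ s : Set F, s.Finite ∧ ∀ x : WeakBilin B, (∀ y ∈ s, B x y = 0) → x ∈ U := by
  obtain ⟨s, hs, hsU⟩ := IsInducing.exists_finite_of_mem_nhds_pi
    (φ := fun (x : WeakBilin B) y => B x y) ⟨rfl⟩ hU
  exact ⟨s, hs, fun x hx => hsU x fun y hy => by
    rw [hx y hy]; exact (LinearMap.congr_fun (map_zero B) y).symm⟩

theorem LinearIndependent.exists_apply_ne_zero_of_forall_eq_zero {𝕜 E ι κ : Type*} [Field 𝕜]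
    [AddCommGroup E] [Module 𝕜 E] [Infinite ι] [Finite κ] {δ : ι → Module.Dual 𝕜 E}
    (hδ : LinearIndependent 𝕜 δ) (L : κ → Module.Dual 𝕜 E) :
    ∃ i v, (∀ k, L k v = 0) ∧ δ i v ≠ 0 := by
  by_contra! h
  have hspan (i : ι) : δ i ∈ Submodule.span 𝕜 (range L) := by
    refine mem_span_of_iInf_ker_le_ker fun v hv => h i v ?_
    simpa only [Submodule.mem_iInf, LinearMap.mem_ker] using hv
  have : FiniteDimensional 𝕜 (Submodule.span 𝕜 (range L)) :=
    FiniteDimensional.span_of_finite 𝕜 (finite_range L)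
  exact Module.Finite.not_linearIndependent_of_infinite
    (fun i => (⟨δ i, hspan i⟩ : Submodule.span 𝕜 (range L)))
    (hδ.of_comp (Submodule.span 𝕜 (range L)).subtype)

theorem Equicontinuous.comp_continuous {ι Y Z α : Type*} [TopologicalSpace Y] [TopologicalSpace Z]
    [UniformSpace α] {F : ι → Y → α} (hF : Equicontinuous F) {e : Z → Y} (he : Continuous e) :
    Equicontinuous fun i => F i ∘ e :=
  equicontinuous_iff_continuous.mpr ((equicontinuous_iff_continuous.mp hF).comp he)

theorem ContinuousMap.tendsto_of_eventually_eqOn {Y β : Type*} [TopologicalSpace Y] [UniformSpace β]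
    {g : ℕ → C(Y, β)} {g₀ : C(Y, β)}
    (hg : ∀ A, IsCompact A → ∀ᶠ n in atTop, EqOn (g n) g₀ A) : Tendsto g atTop (𝓝 g₀) := by
  refine tendsto_iff_forall_isCompact_tendstoUniformlyOn.mpr fun A hA u hu => ?_
  filter_upwards [hg A hA] with n hn x hx
  rw [hn hx]
  exact refl_mem_uniformity hu

theorem IsAscoli.equicontinuous_of_tendsto {Y : Type*} [TopologicalSpace Y] (hY : IsAscoli Y)
    {g : ℕ → C(Y, ℝ)} {g₀ : C(Y, ℝ)} (hg : Tendsto g atTop (𝓝 g₀)) :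
    Equicontinuous fun n => ⇑(g n) :=
  (hY _ hg.isCompact_insert_range).comp fun n => ⟨g n, mem_insert_of_mem _ (mem_range_self n)⟩

theorem IsAscoli.of_homeomorph {Y Z : Type*} [TopologicalSpace Y] [TopologicalSpace Z]
    (hY : IsAscoli Y) (e : Y ≃ₜ Z) : IsAscoli Z := by
  intro S hS
  let pullback : C(Z, ℝ) → C(Y, ℝ) := fun g => g.comp e
  have hpullback := hY _ (hS.image (ContinuousMap.continuous_precomp (e : C(Y, Z))))
  convert (hpullback.comp fun g : S => ⟨pullback g, mem_image_of_mem _ g.2⟩).comp_continuous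
    e.symm.continuous using 2 with g
  ext z
  simp [pullback]

theorem BarrelledSpace.of_continuousLinearEquiv {𝕜 E F : Type*} [NontriviallyNormedField 𝕜]
    [AddCommGroup E] [Module 𝕜 E] [TopologicalSpace E] [AddCommGroup F] [Module 𝕜 F]
    [TopologicalSpace F] [BarrelledSpace 𝕜 E] (e : E ≃L[𝕜] F) : BarrelledSpace 𝕜 F where
  continuous_of_lowerSemicontinuous p hp := by
    have hpe : Continuous (p.comp (e : E →ₗ[𝕜] F)) :=
      continuous_of_lowerSemicontinuous _ (hp.comp e.continuous)
    convert hpe.comp e.symm.continuous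
    ext v
    simp

theorem IsCompact.isBounded_of_weakSpace {𝕜 E : Type*} [RCLike 𝕜] [NormedAddCommGroup E]
    [NormedSpace 𝕜 E] {S : Set (WeakSpace 𝕜 E)} (hS : IsCompact S) :
    Bornology.IsBounded (toWeakSpace 𝕜 E ⁻¹' S) := by
  have hB := WeakDual.isBounded_iff_isVonNBounded.mpr
    ((hS.image (NormedSpace.inclusionInDoubleDualWeak 𝕜 E).continuous).isVonNBounded 𝕜)
  obtain ⟨C, hC⟩ := isBounded_iff_forall_norm_le.mp hB
  refine isBounded_iff_forall_norm_le.mpr ⟨C, fun v hv => ?_⟩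
  rw [← (NormedSpace.inclusionInDoubleDualLi 𝕜).norm_map v]
  exact hC _ ⟨_, hv, rfl⟩

section

variable {X : Type*} [TopologicalSpace X]

theorem CompletelyRegularSpace.exists_continuousMap_eq_one_eqOn_zero [CompletelyRegularSpace X]
    {F : Set X} (hF : IsClosed F) {y : X} (hy : y ∉ F) :
    ∃ f : C(X, ℝ), f y = 1 ∧ EqOn f 0 F := by
  obtain ⟨g, hg, hgy, hgF⟩ := completely_regular y F hF hy
  refine ⟨⟨fun x => 1 - (g x : ℝ), by fun_prop⟩, by simp [hgy], fun x hx => ?_⟩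
  simp [hgF hx]

theorem ContinuousMap.linearIndependent_evalCLM [CompletelyRegularSpace X] [T1Space X] {ι : Type*}
    {x : ι → X} (hx : Injective x) :
    LinearIndependent ℝ fun i => ((evalCLM ℝ (x i) : C(X, ℝ) →L[ℝ] ℝ) : C(X, ℝ) →ₗ[ℝ] ℝ) := by
  rw [linearIndependent_iff']
  intro s c hc i hi
  obtain ⟨f, hfi, hf0⟩ := CompletelyRegularSpace.exists_continuousMap_eq_one_eqOn_zero
    ((s.finite_toSet.sdiff (t := {i})).image x).isClosed
    (fun ⟨j, hj, hji⟩ => hj.2 (hx hji))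
  have hcf := LinearMap.congr_fun hc f
  simp only [LinearMap.coe_sum, LinearMap.coe_smul, ContinuousLinearMap.coe_coe, Finset.sum_apply,
    Pi.smul_apply, evalCLM_apply, smul_eq_mul, LinearMap.zero_apply] at hcf
  rwa [Finset.sum_eq_single_of_mem i hi fun j hj hji => by
    rw [hf0 (mem_image_of_mem x ⟨hj, hji⟩), Pi.zero_apply, mul_zero], hfi, mul_one] at hcf

theorem ContinuousMap.exists_apply_eq_of_mem_nhds_zero_weakSpace [CompletelyRegularSpace X]
    [T1Space X] {x : ℕ → X} (hx : Injective x) {U : Set (WeakSpace ℝ C(X, ℝ))} (hU : U ∈ 𝓝 0)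
    (c : ℕ → ℝ) : ∃ n, ∃ f : C(X, ℝ), toWeakSpace ℝ _ f ∈ U ∧ f (x n) = c n := by
  obtain ⟨s, hs, hsU⟩ := WeakBilin.exists_finite_of_mem_nhds_zero hU
  have := hs.to_subtype
  obtain ⟨n, f, hf0, hfn : f (x n) ≠ 0⟩ :=
    (linearIndependent_evalCLM hx).exists_apply_ne_zero_of_forall_eq_zero
      fun μ : s => ((μ : StrongDual ℝ C(X, ℝ)) : C(X, ℝ) →ₗ[ℝ] ℝ)
  refine ⟨n, (c n / f (x n)) • f, hsU _ fun μ hμ => ?_, by simp [hfn]⟩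
  have hμf : μ f = 0 := hf0 ⟨μ, hμ⟩
  change μ ((c n / f (x n)) • f) = 0
  simp [hμf]

theorem ContinuousMap.exists_bound_of_isCompact_weakSpace {A : Set (WeakSpace ℝ C(X, ℝ))}
    (hA : IsCompact A) {K : Set X} (hK : IsCompact K) :
    ∃ M, ∀ f : C(X, ℝ), toWeakSpace ℝ _ f ∈ A → ∀ x ∈ K, |f x| ≤ M := by
  have : CompactSpace K := isCompact_iff_compactSpace.mp hK
  let restrict : C(X, ℝ) →L[ℝ] C(K, ℝ) := compCLM ℝ ℝ ⟨Subtype.val, continuous_subtype_val⟩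
  obtain ⟨M, hM⟩ := isBounded_iff_forall_norm_le.mp
    (hA.image (WeakSpace.map restrict).continuous).isBounded_of_weakSpace
  exact ⟨M, fun f hf x hx => (norm_coe_le_norm (restrict f) ⟨x, hx⟩).trans (hM _ ⟨f, hf, rfl⟩)⟩

theorem IsCompact.finite_of_isAscoli_weakSpace [CompletelyRegularSpace X] [T1Space X]
    (hascoli : IsAscoli (WeakSpace ℝ C(X, ℝ))) {K : Set X} (hK : IsCompact K) : K.Finite := by
  refine not_infinite.mp fun hinf => ?_
  let x (n : ℕ) : X := hinf.natEmbedding K n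
  have hx : Injective x := Subtype.val_injective.comp (hinf.natEmbedding K).injective
  let eval (n : ℕ) : WeakSpace ℝ C(X, ℝ) → ℝ := fun f => (toWeakSpace ℝ _).symm f (x n)
  let g (n : ℕ) : C(WeakSpace ℝ C(X, ℝ), ℝ) :=
    ⟨fun f => max 0 (|eval n f| - n),
      continuous_const.max ((WeakBilin.eval_continuous _ (ContinuousMap.evalCLM ℝ (x n))).abs.sub
        continuous_const)⟩
  have hg : Tendsto g atTop (𝓝 0) := ContinuousMap.tendsto_of_eventually_eqOn fun A hA => by
    obtain ⟨M, hM⟩ := ContinuousMap.exists_bound_of_isCompact_weakSpace hA hK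
    filter_upwards [eventually_ge_atTop ⌈M⌉₊] with n hn f hf
    have : |eval n f| ≤ n := (hM _ hf _ (hinf.natEmbedding K n).2).trans
      ((Nat.le_ceil M).trans (by exact_mod_cast hn))
    simp [g, this]
  obtain ⟨U, hU, hUg⟩ := eventually_iff_exists_mem.mp <|
    Metric.equicontinuousAt_iff_right.mp (hascoli.equicontinuous_of_tendsto hg 0) 1 one_pos
  obtain ⟨n, f, hfU, hfn⟩ :=
    ContinuousMap.exists_apply_eq_of_mem_nhds_zero_weakSpace hx hU fun n => n + 1
  have hg0 : g n 0 = 0 := by simp [g, eval]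
  have hg1 : g n (toWeakSpace ℝ _ f) = 1 := by
    simp only [g, eval, ContinuousMap.coe_mk, LinearEquiv.symm_apply_apply, hfn]
    rw [abs_of_pos (by positivity)]
    norm_num
  simpa [hg0, hg1] using hUg _ hfU n

end

namespace Cp

variable {X : Type*} [TopologicalSpace X]

theorem isInducing_coe : IsInducing fun f : Cp X => (f.toCM : X → ℝ) := ⟨rfl⟩

theorem continuous_eval (x : X) : Continuous fun f : Cp X => f.toCM x :=
  (continuous_apply x).comp continuous_induced_dom

theorem continuous_rng_iff {Y : Type*} [TopologicalSpace Y] {g : Y → Cp X} :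
    Continuous g ↔ ∀ x, Continuous fun y => (g y).toCM x := by
  rw [isInducing_coe.continuous_iff, continuous_pi_iff]
  rfl

noncomputable def linearEquiv : Cp X ≃ₗ[ℝ] C(X, ℝ) := LinearEquiv.refl ℝ C(X, ℝ)

theorem continuous_toCM_of_forall_finite (hX : ∀ K : Set X, IsCompact K → K.Finite) :
    Continuous (toCM : Cp X → C(X, ℝ)) := by
  refine ContinuousMap.continuous_compactOpen.mpr fun K hK U hU => ?_
  have hMapsTo : {f : Cp X | MapsTo f.toCM K U} = ⋂ x ∈ K, {f : Cp X | f.toCM x ∈ U} := by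
    ext f
    simp [MapsTo]
  rw [hMapsTo]
  exact (hX K hK).isOpen_biInter fun x _ => hU.preimage (continuous_eval x)

variable (X) in
noncomputable def continuousLinearEquiv (hX : ∀ K : Set X, IsCompact K → K.Finite) :
    C(X, ℝ) ≃L[ℝ] Cp X where
  toLinearEquiv := linearEquiv.symm
  continuous_toFun := continuous_rng_iff.mpr fun x => continuous_eval_const x
  continuous_invFun := continuous_toCM_of_forall_finite hX

variable (X) in
def homeomorphWeakSpace (hX : ∀ K : Set X, IsCompact K → K.Finite) :
    WeakSpace ℝ C(X, ℝ) ≃ₜ Cp X where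
  toEquiv := Equiv.refl _
  continuous_toFun := continuous_rng_iff.mpr fun x =>
    WeakBilin.eval_continuous _ (ContinuousMap.evalCLM ℝ x)
  continuous_invFun :=
    (toWeakSpaceCLM ℝ C(X, ℝ)).continuous.comp (continuous_toCM_of_forall_finite hX)

theorem finite_of_isCompact [CompletelyRegularSpace X] [T1Space X] [BarrelledSpace ℝ (Cp X)]
    {K : Set X} (hK : IsCompact K) : K.Finite := by
  have : CompactSpace K := isCompact_iff_compactSpace.mp hK
  let restrict : C(X, ℝ) →L[ℝ] C(K, ℝ) :=
    ContinuousMap.compCLM ℝ ℝ ⟨Subtype.val, continuous_subtype_val⟩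
  let supNorm : Seminorm ℝ (Cp X) :=
    (normSeminorm ℝ C(K, ℝ)).comp ((restrict : C(X, ℝ) →ₗ[ℝ] C(K, ℝ)) ∘ₗ linearEquiv.toLinearMap)
  have hsupNorm : (supNorm : Cp X → ℝ) = fun f => ⨆ x : K, ‖f.toCM x‖ :=
    funext fun f => ContinuousMap.norm_eq_iSup_norm (restrict f.toCM)
  have hlsc : LowerSemicontinuous supNorm := by
    rw [hsupNorm]
    exact lowerSemicontinuous_ciSup
      (fun f => ⟨_, forall_mem_range.2 (restrict f.toCM).norm_coe_le_norm⟩)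
      fun x => (continuous_eval (x : X)).norm.lowerSemicontinuous
  have hball : {f | supNorm f < 1} ∈ 𝓝 (0 : Cp X) :=
    (BarrelledSpace.continuous_of_lowerSemicontinuous _ hlsc).continuousAt.preimage_mem_nhds
      (Iio_mem_nhds (by simp))
  obtain ⟨F, hF, hFball⟩ := isInducing_coe.exists_finite_of_mem_nhds_pi hball
  refine hF.subset fun y hyK => by_contra fun hyF => ?_
  obtain ⟨f, hfy, hfF⟩ :=
    CompletelyRegularSpace.exists_continuousMap_eq_one_eqOn_zero hF.isClosed hyF
  have hlt : supNorm f < 1 := hFball f fun x hx => hfF hx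
  have hge : 1 ≤ supNorm f :=
    calc (1 : ℝ) = ‖restrict f ⟨y, hyK⟩‖ := by simp [restrict, hfy]
      _ ≤ supNorm f := ContinuousMap.norm_coe_le_norm _ _
  exact hlt.not_ge hge

end Cp

/-- `C_k(X)` is barrelled and weakly Ascoli if and only if `C_p(X)` is barrelled and Ascoli. -/
theorem statement12 {X : Type*} [TopologicalSpace X] [CompletelyRegularSpace X] [T2Space X] :
    (BarrelledSpace ℝ C(X, ℝ) ∧ IsAscoli (WeakSpace ℝ C(X, ℝ))) ↔
      (BarrelledSpace ℝ (Cp X) ∧ IsAscoli (Cp X)) := by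
  constructor
  · rintro ⟨hbarrelled, hascoli⟩
    have hX (K : Set X) (hK : IsCompact K) := hK.finite_of_isAscoli_weakSpace hascoli
    exact ⟨.of_continuousLinearEquiv (Cp.continuousLinearEquiv X hX),
      hascoli.of_homeomorph (Cp.homeomorphWeakSpace X hX)⟩
  · rintro ⟨hbarrelled, hascoli⟩
    have hX (K : Set X) (hK : IsCompact K) := Cp.finite_of_isCompact hK
    exact ⟨.of_continuousLinearEquiv (Cp.continuousLinearEquiv X hX).symm,
      hascoli.of_homeomorph (Cp.homeomorphWeakSpace X hX).symm⟩
end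

section
/- Let (G_i)_{i∈I} be a nonempty family of Hausdorff topological abelian groups (written additively), and let G = ⊕_{i∈I} G_i be their direct sum, i.e., the subgroup of the product ∏_{i∈I} G_i consisting of elements with only finitely many nonzero coordinates. Let τ be a topological group topology on G that is finer than or equal to the subspace topology induced on G by the box topology on the product. If A ⊆ G is functionally bounded in (G,τ), then the support supp(A) = {i ∈ I : there exists v ∈ A with v_i ≠ 0} is finite. -/
open Set Topology DirectSum

/-- The box topology on a product of topological spaces. -/
def boxTopology {I : Type*} (G : I → Type*) [∀ i, TopologicalSpace (G i)] :
    TopologicalSpace (∀ i, G i) :=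
  TopologicalSpace.generateFrom
    {S | ∃ U : ∀ i, Set (G i), (∀ i, IsOpen (U i)) ∧ S = Set.pi Set.univ U}

/-!
Hausdorff topological groups are uniformizable, hence Tychonoff. So for every `i` in the support
of `A` we can pick `a ∈ A` with `a i ≠ 0` and a continuous `g i : G i → ℝ≥0` with `g i 0 = 0` and
`g i (a i)` as large as we like. The function `v ↦ sup_i g i (v i)` is well defined on the direct
sum and continuous for the box topology, because a box around `w` controls all the coordinates
`g i (v i)` uniformly at once. If the support were infinite, the values `g i (a i)` could be chosen
unbounded, so this continuous function would be unbounded on `A`.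
-/

open scoped NNReal

theorem Set.finite_of_forall_bddAbove_image {ι : Type*} {S : Set ι}
    (h : ∀ c : ι → ℕ, BddAbove (c '' S)) : S.Finite := by
  refine Set.not_infinite.1 fun hS => ?_
  let e : ℕ → ι := fun n => hS.natEmbedding S n
  have he : Function.Injective e := fun m n hmn =>
    (hS.natEmbedding S).injective (Subtype.ext hmn)
  obtain ⟨N, hN⟩ := h (Function.invFun e)
  have := hN ⟨e (N + 1), (hS.natEmbedding S (N + 1)).2, Function.leftInverse_invFun he _⟩
  omega

theorem IsTopologicalAddGroup.completelyRegularSpace (G : Type*) [TopologicalSpace G]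
    [AddGroup G] [IsTopologicalAddGroup G] : CompletelyRegularSpace G :=
  .of_exists_uniformSpace ⟨IsTopologicalAddGroup.rightUniformSpace G, rfl⟩

theorem exists_continuous_nnreal_eq_zero_and_eq_of_ne {X : Type*} [TopologicalSpace X]
    [CompletelyRegularSpace X] [T1Space X] {x y : X} (hxy : x ≠ y) (c : ℝ≥0) :
    ∃ f : X → ℝ≥0, Continuous f ∧ f y = 0 ∧ f x = c := by
  obtain ⟨g, hg, hgy, hgx⟩ :=
    CompletelyRegularSpace.completely_regular y {x} isClosed_singleton hxy.symm
  refine ⟨fun z => c * (g z : ℝ).toNNReal, by fun_prop, ?_, ?_⟩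
  · simp [hgy]
  · simp [hgx rfl]

theorem isOpen_boxTopology_pi {ι : Type*} {X : ι → Type*} [∀ i, TopologicalSpace (X i)]
    {U : ∀ i, Set (X i)} (hU : ∀ i, IsOpen (U i)) : IsOpen[boxTopology X] (univ.pi U) :=
  TopologicalSpace.isOpen_generateFrom_of_mem ⟨U, hU, rfl⟩

theorem NNReal.dist_le_iff {a b δ : ℝ≥0} : dist a b ≤ δ ↔ a ≤ b + δ ∧ b ≤ a + δ := by
  rw [NNReal.dist_eq, abs_sub_le_iff, ← NNReal.coe_le_coe, ← NNReal.coe_le_coe]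
  push_cast
  constructor <;> rintro ⟨h₁, h₂⟩ <;> constructor <;> linarith

namespace DFinsupp

variable {ι : Type*} {X : ι → Type*} [∀ i, Zero (X i)] {f : ∀ i, X i → ℝ≥0}

open Classical in
noncomputable def supApply (f : ∀ i, X i → ℝ≥0) (w : Π₀ i, X i) : ℝ≥0 :=
  w.support.sup fun i => f i (w i)

theorem le_supApply (hf : ∀ i, f i 0 = 0) (w : Π₀ i, X i) (i : ι) :
    f i (w i) ≤ supApply f w := by
  classical
  by_cases hw : w i = 0
  · simp [hw, hf]
  · exact Finset.le_sup (f := fun i => f i (w i)) (mem_support_iff.2 hw)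

theorem supApply_le {w : Π₀ i, X i} {c : ℝ≥0} (h : ∀ i, f i (w i) ≤ c) : supApply f w ≤ c :=
  Finset.sup_le fun i _ => h i

theorem dist_supApply_le (hf : ∀ i, f i 0 = 0) {v w : Π₀ i, X i} {δ : ℝ≥0}
    (h : ∀ i, dist (f i (v i)) (f i (w i)) ≤ δ) : dist (supApply f v) (supApply f w) ≤ δ :=
  NNReal.dist_le_iff.2
    ⟨supApply_le fun i =>
      (NNReal.dist_le_iff.1 (h i)).1.trans (by gcongr; exact le_supApply hf w i),
     supApply_le fun i =>
      (NNReal.dist_le_iff.1 (h i)).2.trans (by gcongr; exact le_supApply hf v i)⟩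

variable [∀ i, TopologicalSpace (X i)]

theorem continuous_supApply (hf : ∀ i, Continuous (f i)) (hf0 : ∀ i, f i 0 = 0) :
    Continuous[(boxTopology X).induced (⇑), _] (supApply f) := by
  let _ := (boxTopology X).induced fun w : Π₀ i, X i => ⇑w
  refine Metric.continuous_iff'.2 fun w ε hε => ?_
  lift ε to ℝ≥0 using hε.le
  have hU : IsOpen ((fun v : Π₀ i, X i => ⇑v) ⁻¹'
      univ.pi fun i => f i ⁻¹' Metric.ball (f i (w i)) (ε / 2 : ℝ≥0)) :=
    isOpen_induced (t := boxTopology X) <|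
      isOpen_boxTopology_pi fun i => Metric.isOpen_ball.preimage (hf i)
  filter_upwards [hU.mem_nhds fun i _ => Metric.mem_ball_self (by simpa using hε)] with v hv
  exact (dist_supApply_le hf0 fun i => (hv i trivial).le).trans_lt
    (by exact_mod_cast half_lt_self (by exact_mod_cast hε))

variable [∀ i, T1Space (X i)] [∀ i, CompletelyRegularSpace (X i)]
  {τ : TopologicalSpace (Π₀ i, X i)}

theorem exists_continuous_ge_on_support (hτ : τ ≤ (boxTopology X).induced (⇑))
    (A : Set (Π₀ i, X i)) (c : ι → ℝ≥0) :
    ∃ F : (Π₀ i, X i) → ℝ≥0, Continuous[τ, _] F ∧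
      ∀ i, (∃ v ∈ A, v i ≠ 0) → ∃ v ∈ A, c i ≤ F v := by
  have (i : ι) : ∃ g : X i → ℝ≥0, Continuous g ∧ g 0 = 0 ∧
      ((∃ v ∈ A, v i ≠ 0) → ∃ v ∈ A, g (v i) = c i) := by
    by_cases hi : ∃ v ∈ A, v i ≠ 0
    · obtain ⟨v, hvA, hv⟩ := hi
      obtain ⟨g, hg, hg0, hgv⟩ := exists_continuous_nnreal_eq_zero_and_eq_of_ne hv (c i)
      exact ⟨g, hg, hg0, fun _ => ⟨v, hvA, hgv⟩⟩
    · exact ⟨0, continuous_const, rfl, fun h => absurd h hi⟩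
  choose g hg hg0 hgA using this
  refine ⟨supApply g, continuous_le_dom hτ (continuous_supApply hg hg0), fun i hi => ?_⟩
  obtain ⟨v, hvA, hv⟩ := hgA i hi
  exact ⟨v, hvA, hv ▸ le_supApply hg0 v i⟩

theorem finite_support_of_forall_isBounded (hτ : τ ≤ (boxTopology X).induced (⇑))
    (A : Set (Π₀ i, X i))
    (hA : ∀ f : (Π₀ i, X i) → ℝ, Continuous[τ, _] f → Bornology.IsBounded (f '' A)) :
    {i | ∃ v ∈ A, v i ≠ 0}.Finite := by
  refine Set.finite_of_forall_bddAbove_image fun c => ?_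
  obtain ⟨F, hF, hFc⟩ := exists_continuous_ge_on_support hτ A fun i => c i
  obtain ⟨C, hC⟩ := (hA _ (NNReal.continuous_coe.comp hF)).bddAbove
  obtain ⟨N, hN⟩ := exists_nat_ge C
  refine ⟨N, ?_⟩
  rintro _ ⟨i, hi, rfl⟩
  obtain ⟨v, hvA, hv⟩ := hFc i hi
  exact_mod_cast (NNReal.coe_le_coe.2 hv).trans ((hC ⟨v, hvA, rfl⟩).trans hN)

end DFinsupp

theorem statement14_general {I : Type*} (G : I → Type*) [∀ i, AddCommGroup (G i)]
    [∀ i, TopologicalSpace (G i)] [∀ i, IsTopologicalAddGroup (G i)] [∀ i, T2Space (G i)]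
    (τ : TopologicalSpace (⨁ i, G i))
    (hfine : τ ≤ TopologicalSpace.induced
      (fun v : ⨁ i, G i => (fun i => v i : ∀ i, G i)) (boxTopology G))
    (A : Set (⨁ i, G i))
    (hA : ∀ f : (⨁ i, G i) → ℝ, @Continuous _ _ τ _ f → Bornology.IsBounded (f '' A)) :
    Set.Finite {i : I | ∃ v ∈ A, v i ≠ 0} := by
  have := fun i => IsTopologicalAddGroup.completelyRegularSpace (G i)
  exact DFinsupp.finite_support_of_forall_isBounded hfine A hA

/-- If `τ` is a group topology on the direct sum `⨁ i, G i` finer than (or equal to) the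
subspace topology induced by the box topology on the product, then every subset of the direct
sum that is functionally bounded with respect to `τ` has finite support. -/
theorem statement14 {I : Type*} [Nonempty I] (G : I → Type*) [∀ i, AddCommGroup (G i)]
    [∀ i, TopologicalSpace (G i)] [∀ i, IsTopologicalAddGroup (G i)] [∀ i, T2Space (G i)]
    (τ : TopologicalSpace (⨁ i, G i))
    (hgrp : @IsTopologicalAddGroup (⨁ i, G i) τ _)
    (hfine : τ ≤ TopologicalSpace.induced
      (fun v : ⨁ i, G i => (fun i => v i : ∀ i, G i)) (boxTopology G))
    (A : Set (⨁ i, G i))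
    (hA : ∀ f : (⨁ i, G i) → ℝ, @Continuous _ _ τ _ f → Bornology.IsBounded (f '' A)) :
    Set.Finite {i : I | ∃ v ∈ A, v i ≠ 0} :=
  statement14_general G τ hfine A hA
end

section
/- Let E be a Hausdorff real locally convex space. The following are equivalent: (i) E equipped with its weak topology σ(E,E′) (in Mathlib, WeakSpace ℝ E) is a barrelled space; (ii) every subset A of the topological dual E′ that is bounded in the weak* topology σ(E′,E) (equivalently, pointwise bounded: for every x ∈ E the set {f(x) : f ∈ A} is bounded in ℝ) spans a finite-dimensional linear subspace of E′; (iii) every subset of E′ that is functionally bounded in E′ equipped with the weak* topology σ(E′,E) spans a finite-dimensional linear subspace of E′. -/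
open Set Topology

/-!
(i) ⇒ (ii): for a pointwise bounded set `A` of functionals, `x ↦ sup_{f ∈ A} |f x|` is a lower
semicontinuous seminorm on `σ(E, E')`; barrelledness makes it continuous, so it is dominated by
`C · max_j |g_j|` for finitely many `g_j ∈ E'`, and every `f ∈ A` vanishes on `⋂ ker g_j`, i.e.
lies in the span of the `g_j`.

(ii) ⇒ (i): by Hahn–Banach a lower semicontinuous seminorm `p` is the supremum of `|f|` over the
pointwise bounded set `A = {f | |f| ≤ p}`. If `A` spans a finite-dimensional space with basis
`(g_i)`, the coordinate functionals are combinations of evaluations, hence bounded on `A`, so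
`p ≤ ∑ M_i |g_i|` is continuous.

(iii) ⇒ (ii): a pointwise bounded set with infinite-dimensional span contains a linearly
independent sequence `f_k`; then `f_k / (k + 1) → 0` weak*, so `{0} ∪ {f_k / (k + 1)}` is compact,
hence functionally bounded, yet spans an infinite-dimensional space.
-/

open Filter Submodule

section SeparatingFunctionals

variable {𝕜 V ι : Type*} [NormedField 𝕜] [AddCommGroup V] [Module 𝕜 V] [FiniteDimensional 𝕜 V]

theorem exists_norm_le_of_iInf_ker_eq_bot {L : ι → V →ₗ[𝕜] 𝕜}
    (hL : ⨅ i, LinearMap.ker (L i) = ⊥) {S : Set V} (hS : ∀ i, ∃ C, ∀ v ∈ S, ‖L i v‖ ≤ C)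
    (φ : V →ₗ[𝕜] 𝕜) : ∃ C, ∀ v ∈ S, ‖φ v‖ ≤ C := by
  have hφ := FiniteDimensional.mem_span_of_iInf_ker_le_ker (K := φ) (hL.trans_le bot_le)
  induction hφ using Submodule.span_induction with
  | mem _ h =>
    obtain ⟨i, rfl⟩ := h
    exact hS i
  | zero => exact ⟨0, by simp⟩
  | add φ ψ _ _ hφ hψ =>
    obtain ⟨C, hC⟩ := hφ
    obtain ⟨D, hD⟩ := hψ
    exact ⟨C + D, fun v hv => (norm_add_le _ _).trans (add_le_add (hC v hv) (hD v hv))⟩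
  | smul c φ _ hφ =>
    obtain ⟨C, hC⟩ := hφ
    exact ⟨‖c‖ * C, fun v hv => by
      simpa only [LinearMap.smul_apply, norm_smul] using
        mul_le_mul_of_nonneg_left (hC v hv) (norm_nonneg c)⟩

end SeparatingFunctionals

theorem LinearMap.exists_norm_le_sum_of_finiteDimensional_span {𝕜 D E : Type*} [NormedField 𝕜]
    [AddCommGroup D] [Module 𝕜 D] [AddCommGroup E] [Module 𝕜 E] (B : D →ₗ[𝕜] E →ₗ[𝕜] 𝕜)
    (hB : Function.Injective B) {A : Set D} [FiniteDimensional 𝕜 (span 𝕜 A)]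
    (hA : ∀ x, ∃ C, ∀ d ∈ A, ‖B d x‖ ≤ C) :
    ∃ (n : ℕ) (g : Fin n → D) (M : Fin n → ℝ), ∀ d ∈ A, ∀ x, ‖B d x‖ ≤ ∑ i, M i * ‖B (g i) x‖ := by
  let V := span 𝕜 A
  let b := Module.finBasis 𝕜 V
  have hsep : ⨅ x, LinearMap.ker (B.flip x ∘ₗ V.subtype) = ⊥ := by
    refine eq_bot_iff.2 fun v hv => ?_
    simp only [Submodule.mem_iInf, LinearMap.mem_ker] at hv
    have hBv : B v = 0 := LinearMap.ext hv
    exact (mem_bot 𝕜).2 (Subtype.ext (hB (hBv.trans (map_zero B).symm)))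
  have hcoord : ∀ i, ∃ C, ∀ v ∈ Subtype.val ⁻¹' A, ‖b.coord i v‖ ≤ C := fun i =>
    exists_norm_le_of_iInf_ker_eq_bot hsep (fun x => (hA x).imp fun C hC v hv => hC v hv) _
  choose M hM using hcoord
  refine ⟨_, fun i => b i, M, fun d hd x => ?_⟩
  set v : V := ⟨d, subset_span hd⟩
  have hexp : B d x = ∑ i, b.repr v i * B (b i) x := by
    calc B d x = B (↑(∑ i, b.repr v i • b i)) x := by rw [b.sum_repr v]
      _ = _ := by simp only [AddSubmonoidClass.coe_finsetSum, SetLike.val_smul, map_sum,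
        map_smul, LinearMap.coe_sum, LinearMap.coe_smul, Finset.sum_apply, Pi.smul_apply,
        smul_eq_mul]
  rw [hexp]
  refine (norm_sum_le _ _).trans (Finset.sum_le_sum fun i _ => ?_)
  rw [norm_mul]
  exact mul_le_mul_of_nonneg_right (hM i v hd) (norm_nonneg _)

theorem Seminorm.continuous_of_le_continuous {𝕜 F : Type*} [NormedField 𝕜] [AddCommGroup F]
    [Module 𝕜 F] [TopologicalSpace F] [IsTopologicalAddGroup F] {p : Seminorm 𝕜 F} {g : F → ℝ}
    (hg : Continuous g) (hg0 : g 0 = 0) (hpg : ∀ x, p x ≤ g x) : Continuous p := by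
  refine Seminorm.continuous_of_continuousAt_zero ?_
  rw [ContinuousAt, map_zero]
  exact squeeze_zero (fun x => apply_nonneg p x) hpg (hg0 ▸ hg.tendsto 0)

namespace Seminorm

variable {F : Type*} [AddCommGroup F] [Module ℝ F]

theorem norm_le_of_forall_le_one (p : Seminorm ℝ F) {f : F →ₗ[ℝ] ℝ}
    (hf : ∀ y, p y ≤ 1 → f y ≤ 1) (y : F) : ‖f y‖ ≤ p y := by
  have hle : ∀ y, f y ≤ p y := by
    intro y
    by_contra! hy
    obtain ⟨r, hpr, hrf⟩ := exists_between hy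
    have hr : 0 < r := (apply_nonneg p y).trans_lt hpr
    have h1 : p (r⁻¹ • y) ≤ 1 := by
      rw [map_smul_eq_mul, Real.norm_of_nonneg (inv_nonneg.2 hr.le), inv_mul_le_one₀ hr]
      exact hpr.le
    have h2 : 1 < f (r⁻¹ • y) := by
      rwa [map_smul, smul_eq_mul, one_lt_inv_mul₀ hr]
    linarith [hf _ h1]
  rw [Real.norm_eq_abs, abs_le]
  refine ⟨?_, hle y⟩
  have := hle (-y)
  rw [map_neg, map_neg_eq_map] at this
  linarith

theorem le_of_forall_dual_le [TopologicalSpace F] [IsTopologicalAddGroup F] [ContinuousSMul ℝ F]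
    [LocallyConvexSpace ℝ F] (p : Seminorm ℝ F) (hp : LowerSemicontinuous p) {x : F} {a : ℝ}
    (h : ∀ f : StrongDual ℝ F, (∀ y, ‖f y‖ ≤ p y) → ‖f x‖ ≤ a) : p x ≤ a := by
  by_contra! hax
  have ha : 0 ≤ a := by simpa using h 0 (fun y => by simp)
  obtain ⟨c, hac, hcx⟩ := exists_between hax
  have hc : 0 < c := ha.trans_lt hac
  have hT : Convex ℝ {y | p y ≤ 1} := by
    simpa only [closedBall_zero_eq] using p.convex_closedBall 0 1
  have hxT : c⁻¹ • x ∉ {y | p y ≤ 1} := by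
    simp only [mem_ofPred_eq, map_smul_eq_mul, Real.norm_of_nonneg (inv_nonneg.2 hc.le), not_le,
      one_lt_inv_mul₀ hc, hcx]
  obtain ⟨g, u, hgT, hgx⟩ := geometric_hahn_banach_closed_point hT (hp.isClosed_preimage 1) hxT
  have hu : 0 < u := by simpa using hgT 0 (by simp)
  have hfp : ∀ y, ‖(u⁻¹ • g) y‖ ≤ p y :=
    p.norm_le_of_forall_le_one (f := (u⁻¹ • g : StrongDual ℝ F)) fun y hy => by
      simpa [inv_mul_le_one₀ hu] using (hgT y hy).le
  have hfx : c < (u⁻¹ • g) x := by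
    simp only [map_smul, smul_eq_mul, FunLike.coe_smul, Pi.smul_apply] at hgx ⊢
    rw [lt_inv_mul_iff₀ hc] at hgx
    rw [lt_inv_mul_iff₀ hu, mul_comm]
    exact hgx
  linarith [h _ hfp, Real.le_norm_self ((u⁻¹ • g) x)]

end Seminorm

theorem LinearMap.mem_span_of_forall_apply_eq_zero {𝕜 E F : Type*} [Field 𝕜] [AddCommGroup E]
    [Module 𝕜 E] [AddCommGroup F] [Module 𝕜 F] {B : E →ₗ[𝕜] F →ₗ[𝕜] 𝕜}
    (hB : Function.Injective B.flip) {s : Finset F} {y : F}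
    (h : ∀ x, (∀ z ∈ s, B x z = 0) → B x y = 0) : y ∈ span 𝕜 (s : Set F) := by
  have hker : ⨅ z : s, LinearMap.ker (B.flip z) ≤ LinearMap.ker (B.flip y) := fun x hx => by
    simp only [Submodule.mem_iInf, LinearMap.mem_ker, LinearMap.flip_apply] at hx ⊢
    exact h x fun z hz => hx ⟨z, hz⟩
  refine (apply_mem_span_image_iff_mem_span hB).1 (span_mono ?_ (mem_span_of_iInf_ker_le_ker hker))
  rintro - ⟨z, rfl⟩
  exact ⟨z, z.2, rfl⟩

namespace WeakBilin

variable {E F : Type*} [AddCommGroup E] [Module ℝ E] [AddCommGroup F] [Module ℝ F]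
  {B : E →ₗ[ℝ] F →ₗ[ℝ] ℝ}

theorem finiteDimensional_span_of_barrelledSpace [BarrelledSpace ℝ (WeakBilin B)]
    (hB : Function.Injective B.flip) {A : Set F} (hA : ∀ x, ∃ C, ∀ y ∈ A, ‖B x y‖ ≤ C) :
    FiniteDimensional ℝ (span ℝ A) := by
  have hσ := B.weakBilin_withSeminorms
  let pA : A → Seminorm ℝ (WeakBilin B) := fun y => B.toSeminormFamily y
  have hbdd : BddAbove (range pA) :=
    Seminorm.bddAbove_range_iff.2 fun x => (hA x).imp fun C hC => by
      rintro - ⟨y, rfl⟩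
      exact hC y y.2
  set q : Seminorm ℝ (WeakBilin B) := ⨆ y, pA y
  have hq : Continuous q := by
    rw [Seminorm.coe_iSup_eq hbdd]
    exact Seminorm.continuous_iSup _ (fun y => hσ.continuous_seminorm _) hbdd
  obtain ⟨s, C, -, hqs⟩ := Seminorm.bound_of_continuous hσ _ hq
  have hAs : A ⊆ span ℝ (s : Set F) := fun y hy =>
    LinearMap.mem_span_of_forall_apply_eq_zero hB fun x hx => by
      have hsup : (s.sup B.toSeminormFamily) x = 0 :=
        le_antisymm (Seminorm.finset_sup_apply_le le_rfl fun z hz => by simp [hx z hz])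
          (apply_nonneg _ _)
      have hy0 : ‖B x y‖ ≤ 0 := calc
        ‖B x y‖ = pA ⟨y, hy⟩ x := rfl
        _ ≤ q x := Seminorm.le_def.1 (le_ciSup hbdd ⟨y, hy⟩) x
        _ ≤ C * (s.sup B.toSeminormFamily) x := hqs x
        _ = 0 := by rw [hsup, mul_zero]
      exact norm_le_zero_iff.1 hy0
  exact Submodule.finiteDimensional_of_le (span_le.2 hAs)

theorem barrelledSpace_of_finiteDimensional_span (hB : Function.Injective B.flip)
    (h : ∀ A : Set F, (∀ x, ∃ C, ∀ y ∈ A, ‖B x y‖ ≤ C) → FiniteDimensional ℝ (span ℝ A)) :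
    BarrelledSpace ℝ (WeakBilin B) := by
  refine ⟨fun p hp => ?_⟩
  set A : Set F := {y | ∀ x, ‖B x y‖ ≤ p x}
  have hA : ∀ x, ∃ C, ∀ y ∈ A, ‖B x y‖ ≤ C := fun x => ⟨p x, fun y hy => hy x⟩
  have := h A hA
  obtain ⟨n, g, M, hM⟩ := B.flip.exists_norm_le_sum_of_finiteDimensional_span hB hA
  have hB0 : B (0 : WeakBilin B) = 0 := map_zero B
  refine p.continuous_of_le_continuous (g := fun x => ∑ i, M i * ‖B x (g i)‖) ?_ (by simp [hB0])
    fun x => p.le_of_forall_dual_le hp fun f hf => ?_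
  · exact continuous_finsetSum _ fun i _ =>
      continuous_const.mul (WeakBilin.eval_continuous B (g i)).norm
  · obtain ⟨y, rfl⟩ := B.dualEmbedding_surjective f
    exact hM y hf x

end WeakBilin

theorem IsCompact.functionallyBounded {Y : Type*} [TopologicalSpace Y] {K : Set Y}
    (hK : IsCompact K) : FunctionallyBounded K :=
  fun f => (hK.image f.continuous).isBounded

theorem exists_linearIndependent_nat_of_not_finiteDimensional_span {K V : Type*} [DivisionRing K]
    [AddCommGroup V] [Module K V] {A : Set V} (hA : ¬FiniteDimensional K (span K A)) :
    ∃ f : ℕ → V, (∀ k, f k ∈ A) ∧ LinearIndependent K f := by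
  obtain ⟨s, hsA, hspan, hli⟩ := exists_linearIndependent K A
  have hs : s.Infinite := fun hfin => hA (hspan ▸ FiniteDimensional.span_of_finite K hfin)
  exact ⟨fun k => hs.natEmbedding s k, fun k => hsA (hs.natEmbedding s k).2,
    hli.comp _ (hs.natEmbedding s).injective⟩

theorem WeakDual.finiteDimensional_span_of_forall_functionallyBounded {E : Type*} [AddCommGroup E]
    [Module ℝ E] [TopologicalSpace E]
    (h : ∀ K : Set (WeakDual ℝ E), FunctionallyBounded K → FiniteDimensional ℝ (span ℝ K))
    {A : Set (WeakDual ℝ E)} (hA : ∀ x : E, ∃ C, ∀ f ∈ A, ‖f x‖ ≤ C) :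
    FiniteDimensional ℝ (span ℝ A) := by
  by_contra hinf
  obtain ⟨f, hfA, hf⟩ := exists_linearIndependent_nat_of_not_finiteDimensional_span hinf
  set g : ℕ → WeakDual ℝ E := fun k => ((k : ℝ) + 1)⁻¹ • f k
  have hg : Tendsto g atTop (𝓝 0) := by
    refine tendsto_iff_forall_eval_tendsto_topDualPairing.2 fun x => ?_
    obtain ⟨C, hC⟩ := hA x
    have hu : Tendsto (fun k : ℕ => ((k : ℝ) + 1)⁻¹) atTop (𝓝 0) := by
      simpa using tendsto_one_div_add_atTop_nhds_zero_nat (𝕜 := ℝ)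
    exact hu.zero_mul_isBoundedUnder_le (isBoundedUnder_of ⟨C, fun k => hC (f k) (hfA k)⟩)
  have hK := h _ hg.isCompact_insert_range.functionallyBounded
  have hgli : LinearIndependent ℝ g :=
    hf.units_smul fun k => Units.mk0 ((k : ℝ) + 1)⁻¹ (by positivity)
  exact Module.Finite.not_linearIndependent_of_infinite
    (fun k => (⟨g k, subset_span (mem_insert_of_mem _ ⟨k, rfl⟩)⟩ : span ℝ (insert 0 (range g))))
    (LinearIndependent.of_comp (span ℝ _).subtype hgli)

theorem statement16_general {E : Type*} [AddCommGroup E] [Module ℝ E] [TopologicalSpace E] :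
    (BarrelledSpace ℝ (WeakSpace ℝ E) ↔
      ∀ A : Set (WeakDual ℝ E),
        (∀ x : E, Bornology.IsBounded ((fun f : WeakDual ℝ E => f x) '' A)) →
          FiniteDimensional ℝ (Submodule.span ℝ A)) ∧
    ((∀ A : Set (WeakDual ℝ E),
        (∀ x : E, Bornology.IsBounded ((fun f : WeakDual ℝ E => f x) '' A)) →
          FiniteDimensional ℝ (Submodule.span ℝ A)) ↔
      ∀ A : Set (WeakDual ℝ E), FunctionallyBounded A →
        FiniteDimensional ℝ (Submodule.span ℝ A)) := by
  have hB : Function.Injective (topDualPairing ℝ E).flip.flip :=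
    fun _ _ h => ContinuousLinearMap.coe_injective h
  have hbdd (A : Set (WeakDual ℝ E)) :
      (∀ x : E, Bornology.IsBounded ((fun f : WeakDual ℝ E => f x) '' A)) ↔
        ∀ x : E, ∃ C, ∀ f ∈ A, ‖f x‖ ≤ C := by
    simp only [isBounded_iff_forall_norm_le, forall_mem_image]
  refine ⟨⟨fun hbar A hA => ?_, fun h => ?_⟩, ⟨fun h A hA => ?_, fun h A hA => ?_⟩⟩
  · have : BarrelledSpace ℝ (WeakBilin (topDualPairing ℝ E).flip) := hbar
    exact WeakBilin.finiteDimensional_span_of_barrelledSpace hB ((hbdd A).1 hA)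
  · exact WeakBilin.barrelledSpace_of_finiteDimensional_span hB fun A hA => h A ((hbdd A).2 hA)
  · exact h A fun x => hA ⟨fun f => f x, WeakDual.eval_continuous x⟩
  · exact WeakDual.finiteDimensional_span_of_forall_functionallyBounded h ((hbdd A).1 hA)

/-- For a Hausdorff real locally convex space `E`, the following are equivalent:
(i) `E` with its weak topology is barrelled; (ii) every pointwise bounded subset of the dual
spans a finite-dimensional subspace; (iii) every subset of the dual that is functionally
bounded in the weak* topology spans a finite-dimensional subspace. -/
theorem statement16 {E : Type*} [AddCommGroup E] [Module ℝ E] [TopologicalSpace E]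
    [IsTopologicalAddGroup E] [ContinuousSMul ℝ E] [LocallyConvexSpace ℝ E] [T2Space E] :
    (BarrelledSpace ℝ (WeakSpace ℝ E) ↔
      ∀ A : Set (WeakDual ℝ E),
        (∀ x : E, Bornology.IsBounded ((fun f : WeakDual ℝ E => f x) '' A)) →
          FiniteDimensional ℝ (Submodule.span ℝ A)) ∧
    ((∀ A : Set (WeakDual ℝ E),
        (∀ x : E, Bornology.IsBounded ((fun f : WeakDual ℝ E => f x) '' A)) →
          FiniteDimensional ℝ (Submodule.span ℝ A)) ↔
      ∀ A : Set (WeakDual ℝ E), FunctionallyBounded A →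
        FiniteDimensional ℝ (Submodule.span ℝ A)) :=
  statement16_general
end
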